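/- arXiv:1311.2863 — 4 statements merged into one kernel-verified Lean document; each statement's English description precedes it below -/
import Mathlib

section
/- Suppose G is an open set in ℝⁿ with finite Lebesgue measure, and let 0 < δ, τ < 1 and 0 < p ≤ q < ∞ be given. Then the following are equivalent: (A) there is a constant C₁ > 0 such that inf_{a∈ℝ} sup_{t>0} |{x ∈ G : |u(x) − a| > t}| · t^q ≤ C₁ (∫_G ∫_{B(y, τ dist(y,∂G))} |u(y) − u(z)|^p / |y−z|^{n+δp} dz dy)^{q/p} for every u ∈ L^∞(G); (B) there is a constant C₂ > 0 such that inf_{a∈ℝ} ∫_G |u(x) − a|^q dx ≤ C₂ (∫_G ∫_{B(y, τ dist(y,∂G))} |u(y) − u(z)|^p / |y−z|^{n+δp} dz dy)^{q/p} for every u ∈ L¹(G). Moreover, in the implication from (A) to (B) one can take C₂ = C(p,q)·C₁ for a constant C(p,q) depending only on p and q, and in the implication from (B) to (A) one can take C₁ = C₂. -/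
/-!
(B) ⇒ (A) is Chebyshev's inequality. For (A) ⇒ (B) we follow Maz'ya's truncation method.
Subtracting a median `m` of `u`, it suffices to bound `∫ v ^ q` for `v = (u - m)⁺` (and for
`(m - u)⁺`), a function vanishing on at least half of `G`. Apply (A) to the truncations
`v_k = min ((v - 2 ^ k)⁺) (2 ^ k)`, `k ∈ ℤ`: as `v_k` vanishes on half of `G` and equals `2 ^ k`
on `{v ≥ 2 ^ (k + 1)}`, no constant approximates it, so `2 ^ (k q) |{v ≥ 2 ^ (k + 1)}| ≲ C₁ E(v_k) ^ (q / p)`.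
Summing over `k` gives `∫ v ^ q` on the left; on the right `q / p ≥ 1` gives
`∑ E(v_k) ^ (q / p) ≤ (∑ E(v_k)) ^ (q / p)`, and pointwise
`∑_k |v_k x - v_k y| ^ p ≤ C(p) |u x - u y| ^ p`, so `∑ E(v_k) ≤ C(p) E(u)`.
-/

open MeasureTheory Metric Set
open scoped ENNReal NNReal BigOperators

noncomputable section

/-- Euclidean `n`-space. -/
abbrev Eucl (n : ℕ) : Type := EuclideanSpace ℝ (Fin n)

/-- `D` is a `c`-John domain (bounded or unbounded): an open connected set such that each
pair of points can be joined by a rectifiable curve, parametrized by arc length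
(formalized as a `1`-Lipschitz parametrization on `[0, ℓ]`), along which
`dist(γ t, ∂D) ≥ min{t, ℓ - t}/c`. -/
def IsJohnDomain (n : ℕ) (c : ℝ) (D : Set (Eucl n)) : Prop :=
  IsOpen D ∧ IsConnected D ∧
    ∀ x₁ ∈ D, ∀ x₂ ∈ D, ∃ ℓ : ℝ, 0 ≤ ℓ ∧ ∃ γ : ℝ → Eucl n,
      γ 0 = x₁ ∧ γ ℓ = x₂ ∧ (∀ t ∈ Icc (0:ℝ) ℓ, γ t ∈ D) ∧
      LipschitzOnWith 1 γ (Icc 0 ℓ) ∧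
      ∀ t ∈ Icc (0:ℝ) ℓ, min t (ℓ - t) / c ≤ infDist (γ t) (frontier D)

/-- The ball `B(x, τ·dist(x, ∂G))`; by convention, if `∂G = ∅` (i.e. `G = ℝⁿ`)
it is all of `ℝⁿ`. -/
def tauBall (n : ℕ) (τ : ℝ) (G : Set (Eucl n)) (x : Eucl n) : Set (Eucl n) :=
  {y : Eucl n | edist x y < ENNReal.ofReal τ * EMetric.infEdist x (frontier G)}

/-- The fractional kernel `|u x - u y|^p / |x - y|^(n + δp)` as an extended real. -/
def fracKernel (n : ℕ) (δ p : ℝ) (u : Eucl n → ℝ) (x y : Eucl n) : ℝ≥0∞ :=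
  ENNReal.ofReal (|u x - u y| ^ p / dist x y ^ ((n : ℝ) + δ * p))

/-- The `p`-th power of the seminorm `|u|_{W^{δ,p}_τ(G)}`. -/
def fracEnergyTau (n : ℕ) (δ τ p : ℝ) (G : Set (Eucl n)) (u : Eucl n → ℝ) : ℝ≥0∞ :=
  ∫⁻ x in G, ∫⁻ y in tauBall n τ G x, fracKernel n δ p u x y ∂volume ∂volume

/-- The `p`-th power of the seminorm `|u|_{W^{δ,p}(G)}`. -/
def fracEnergy (n : ℕ) (δ p : ℝ) (G : Set (Eucl n)) (u : Eucl n → ℝ) : ℝ≥0∞ :=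
  ∫⁻ x in G, ∫⁻ y in G, fracKernel n δ p u x y ∂volume ∂volume

/-- The fractional `(δ,p)`-capacity of a compact set `K ⊆ G`:
`inf |u|_{W^{δ,p}(G)}^p` over `u ∈ C₀(G)` with `u ≥ 1` on `K`. -/
def fracCap (n : ℕ) (δ p : ℝ) (K G : Set (Eucl n)) : ℝ≥0∞ :=
  ⨅ (u : Eucl n → ℝ) (_ : Continuous u) (_ : HasCompactSupport u) (_ : tsupport u ⊆ G)
    (_ : ∀ x ∈ K, 1 ≤ u x), fracEnergy n δ p G u

/-- The fractional `(δ,q,p)`-Hardy inequality holds in `G` with constant `C`. -/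
def HasFracHardy (n : ℕ) (δ p q C : ℝ) (G : Set (Eucl n)) : Prop :=
  ∀ u : Eucl n → ℝ, Continuous u → HasCompactSupport u → tsupport u ⊆ G →
    (∫⁻ x in G, ENNReal.ofReal
        (|u x| ^ q / infDist x (frontier G) ^ (q * (δ + n * (1/q - 1/p)))) ∂volume)
      ≤ ENNReal.ofReal C * fracEnergy n δ p G u ^ (q / p)

/-- The closed axis-parallel cube with center `z` and half side length `r`. -/
def cube (n : ℕ) (z : Eucl n) (r : ℝ) : Set (Eucl n) :=
  {x : Eucl n | ∀ i, |x i - z i| ≤ r}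

/-- The quantity `|Q|^(-1-δ/n) ∫_Q |u - u_Q|` for the cube `Q = cube n z r`. -/
def aTerm (n : ℕ) (δ : ℝ) (u : Eucl n → ℝ) (z : Eucl n) (r : ℝ) : ℝ :=
  ((volume (cube n z r)).toReal) ^ (-(1:ℝ) - δ / n) *
    ∫ x in cube n z r, |u x - ⨍ y in cube n z r, u y ∂volume| ∂volume

/-- The seminorm `|u|_{A^{δ,p}_κ(G)}`: the supremum, over families `𝒬` of pairwise
disjoint cubes `Q` (given by center-halfside pairs) with `κQ ⊆ G`, of the `L^p(G)`
norm of `∑_{Q ∈ 𝒬} (|Q|^(-1-δ/n) ∫_Q |u - u_Q|) χ_Q`. -/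
def ASeminorm (n : ℕ) (κ δ p : ℝ) (G : Set (Eucl n)) (u : Eucl n → ℝ) : ℝ≥0∞ :=
  ⨆ (𝒬 : Set (Eucl n × ℝ)) (_ : ∀ c ∈ 𝒬, 0 < c.2 ∧ cube n c.1 (κ * c.2) ⊆ G)
    (_ : ∀ c ∈ 𝒬, ∀ c' ∈ 𝒬, c ≠ c' → cube n c.1 c.2 ∩ cube n c'.1 c'.2 = ∅),
    (∫⁻ x in G,
        (∑' c : 𝒬, (cube n (c : Eucl n × ℝ).1 (c : Eucl n × ℝ).2).indicator
          (fun _ => ENNReal.ofReal (aTerm n δ u (c : Eucl n × ℝ).1 (c : Eucl n × ℝ).2)) x) ^ p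
      ∂volume) ^ (1 / p)

/-- `Q` is a closed dyadic cube in `ℝⁿ`. -/
def IsDyadicCube (n : ℕ) (Q : Set (Eucl n)) : Prop :=
  ∃ (k : ℤ) (z : Fin n → ℤ),
    Q = {x : Eucl n | ∀ i, (z i : ℝ) * (2:ℝ) ^ k ≤ x i ∧ x i ≤ ((z i : ℝ) + 1) * (2:ℝ) ^ k}

/-- `W` is a Whitney decomposition of the proper open set `G`: a countable family of
closed dyadic cubes with pairwise disjoint interiors whose union is `G`, with
`diam Q ≤ dist(Q, ∂G) ≤ 4 diam Q` for each cube `Q ∈ W`. -/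
def IsWhitneyDecomposition (n : ℕ) (G : Set (Eucl n)) (W : Set (Set (Eucl n))) : Prop :=
  W.Countable ∧ (∀ Q ∈ W, IsDyadicCube n Q) ∧ ⋃₀ W = G ∧
    (W.Pairwise fun Q R => interior Q ∩ interior R = ∅) ∧
    ∀ Q ∈ W, (∀ x ∈ Q, Metric.diam Q ≤ infDist x (frontier G)) ∧
      ∃ x ∈ Q, infDist x (frontier G) ≤ 4 * Metric.diam Q

/-- `lam` is an upper Assouad-type covering exponent for `E`: there is `C > 0` such
that for every `x ∈ E` and all `0 < r < R < 2 diam E`, the set `E ∩ B(x,R)` can be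
covered by at most `C (R/r)^lam` balls centered in `E` of radius `r`. -/
def UpperAssouadBound (n : ℕ) (E : Set (Eucl n)) (lam : ℝ) : Prop :=
  ∃ C : ℝ, 0 < C ∧ ∀ x ∈ E, ∀ r R : ℝ, 0 < r → r < R →
    ENNReal.ofReal R < 2 * EMetric.diam E →
    ∃ F : Finset (Eucl n), ↑F ⊆ E ∧ (F.card : ℝ) ≤ C * (R / r) ^ lam ∧
      E ∩ ball x R ⊆ ⋃ y ∈ F, ball y r

/-- The upper Assouad dimension of `E`. -/
def upperAssouadDim (n : ℕ) (E : Set (Eucl n)) : ℝ :=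
  sInf {lam : ℝ | 0 ≤ lam ∧ UpperAssouadBound n E lam}

/-- `lam` is a lower Assouad-type exponent for `E`: there is `C > 0` such that for
every `x ∈ E` and all `0 < r < R < 2 diam E`, at least `C (R/r)^lam` balls centered
in `E` of radius `r` are needed to cover `E ∩ B(x,R)`. -/
def LowerAssouadBound (n : ℕ) (E : Set (Eucl n)) (lam : ℝ) : Prop :=
  ∃ C : ℝ, 0 < C ∧ ∀ x ∈ E, ∀ r R : ℝ, 0 < r → r < R →
    ENNReal.ofReal R < 2 * EMetric.diam E →
    ∀ F : Finset (Eucl n), ↑F ⊆ E → (E ∩ ball x R ⊆ ⋃ y ∈ F, ball y r) →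
      C * (R / r) ^ lam ≤ (F.card : ℝ)

/-- The lower Assouad dimension of `E`. -/
def lowerAssouadDim (n : ℕ) (E : Set (Eucl n)) : ℝ :=
  sSup {lam : ℝ | 0 ≤ lam ∧ LowerAssouadBound n E lam}

end


open Filter Topology

section LevelTruncation

def levelTrunc (c x : ℝ) : ℝ := min (max (x - c) 0) c

variable {c r s x : ℝ}

lemma levelTrunc_nonneg (hc : 0 ≤ c) : 0 ≤ levelTrunc c x :=
  le_min (le_max_right _ _) hc

lemma levelTrunc_le : levelTrunc c x ≤ c := min_le_right _ _

lemma levelTrunc_of_le (hc : 0 ≤ c) (hx : x ≤ c) : levelTrunc c x = 0 := by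
  simp only [levelTrunc, min_def, max_def]; split_ifs <;> linarith

lemma levelTrunc_of_two_mul_le (hc : 0 ≤ c) (hx : 2 * c ≤ x) : levelTrunc c x = c := by
  simp only [levelTrunc, min_def, max_def]; split_ifs <;> linarith

lemma monotone_levelTrunc : Monotone (levelTrunc c) := fun _ _ h => by
  unfold levelTrunc; gcongr

lemma continuous_levelTrunc : Continuous (levelTrunc c) := by
  unfold levelTrunc; fun_prop

lemma levelTrunc_sub_le (hrs : r ≤ s) : levelTrunc c s - levelTrunc c r ≤ s - r := by
  simp only [levelTrunc, min_def, max_def]; split_ifs <;> linarith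

lemma levelTrunc_sub_eq_zero (hc : 0 ≤ c) (hrs : r ≤ s) (h : s ≤ c ∨ 2 * c ≤ r) :
    levelTrunc c s - levelTrunc c r = 0 := by
  rcases h with h | h
  · rw [levelTrunc_of_le hc h, levelTrunc_of_le hc (hrs.trans h), sub_self]
  · rw [levelTrunc_of_two_mul_le hc (h.trans hrs), levelTrunc_of_two_mul_le hc h, sub_self]

end LevelTruncation

lemma sum_zpow_le_of_forall_le {a : ℝ} (ha : 1 < a) {J : ℤ} {F : Finset ℤ}
    (hF : ∀ k ∈ F, k ≤ J) : ∑ k ∈ F, a ^ k ≤ a ^ J * (1 - a⁻¹)⁻¹ := by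
  have ha₀ : 0 < a := zero_lt_one.trans ha
  have hinv : a⁻¹ < 1 := inv_lt_one_of_one_lt₀ ha
  have hterm : ∀ k ∈ F, a ^ k = a ^ J * a⁻¹ ^ (J - k).toNat := by
    intro k hk
    rw [inv_pow, ← zpow_natCast, Int.toNat_of_nonneg (sub_nonneg.2 (hF k hk)), ← zpow_neg,
      ← zpow_add₀ ha₀.ne']
    congr 1; ring
  have hinj : Set.InjOn (fun k => (J - k).toNat) F := fun k hk l hl h => by
    have := hF k hk; have := hF l hl; simp only at h; omega
  calc ∑ k ∈ F, a ^ k = ∑ j ∈ F.image (fun k => (J - k).toNat), a ^ J * a⁻¹ ^ j := by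
        rw [Finset.sum_image hinj]; exact Finset.sum_congr rfl hterm
    _ ≤ ∑' j, a ^ J * a⁻¹ ^ j :=
        Summable.sum_le_tsum _ (fun j _ => by positivity)
          ((summable_geometric_of_lt_one (by positivity) hinv).mul_left _)
    _ = a ^ J * (1 - a⁻¹)⁻¹ := by
        rw [tsum_mul_left, tsum_geometric_of_lt_one (by positivity) hinv]

lemma sum_zpow_rpow_le {p d : ℝ} (hp : 0 < p) (hd : 0 ≤ d) {F : Finset ℤ}
    (hF : ∀ k ∈ F, (2:ℝ) ^ k ≤ d) :
    ∑ k ∈ F, ((2:ℝ) ^ k) ^ p ≤ (1 - ((2:ℝ) ^ p)⁻¹)⁻¹ * d ^ p := by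
  have h2p : 1 < (2:ℝ) ^ p := Real.one_lt_rpow one_lt_two hp
  have hρ : 0 < 1 - ((2:ℝ) ^ p)⁻¹ := sub_pos.2 (inv_lt_one_of_one_lt₀ h2p)
  rcases F.eq_empty_or_nonempty with rfl | ⟨k₀, hk₀⟩
  · rw [Finset.sum_empty]
    positivity
  have hd₀ : 0 < d := (zpow_pos two_pos k₀).trans_le (hF k₀ hk₀)
  have hJ : ∀ k ∈ F, k ≤ Int.log 2 d := fun k hk =>
    (Int.zpow_le_iff_le_log one_lt_two hd₀).1 (by exact_mod_cast hF k hk)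
  calc ∑ k ∈ F, ((2:ℝ) ^ k) ^ p = ∑ k ∈ F, ((2:ℝ) ^ p) ^ k :=
        Finset.sum_congr rfl fun k _ => (Real.rpow_zpow_comm zero_le_two p k).symm
    _ ≤ ((2:ℝ) ^ p) ^ Int.log 2 d * (1 - ((2:ℝ) ^ p)⁻¹)⁻¹ :=
        sum_zpow_le_of_forall_le h2p hJ
    _ ≤ d ^ p * (1 - ((2:ℝ) ^ p)⁻¹)⁻¹ := by
        rw [Real.rpow_zpow_comm zero_le_two]
        gcongr
        exact_mod_cast Int.zpow_log_le_self one_lt_two hd₀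
    _ = (1 - ((2:ℝ) ^ p)⁻¹)⁻¹ * d ^ p := mul_comm _ _

lemma card_filter_zpow_mem_Ioo_le_two (M : ℝ) (F : Finset ℤ) :
    (F.filter fun k => M < (2:ℝ) ^ k ∧ (2:ℝ) ^ k < 4 * M).card ≤ 2 := by
  set L := Int.log 2 M
  refine (Finset.card_le_card fun k hk => ?_).trans (Finset.card_le_two (a := L + 1) (b := L + 2))
  obtain ⟨-, hMk, hk4⟩ := Finset.mem_filter.1 hk
  have hM : 0 < M := by linarith [zpow_pos (two_pos : (0:ℝ) < 2) k]
  have hL : (2:ℝ) ^ L ≤ M := by exact_mod_cast Int.zpow_log_le_self one_lt_two hM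
  have hL' : M < (2:ℝ) ^ (L + 1) := by exact_mod_cast Int.lt_zpow_succ_log_self one_lt_two M
  have h₁ : L < k := (zpow_lt_zpow_iff_right₀ one_lt_two).1 (hL.trans_lt hMk)
  have h₂ : k < L + 3 := by
    refine (zpow_lt_zpow_iff_right₀ (one_lt_two : (1:ℝ) < 2)).1 ?_
    rw [zpow_add₀ two_ne_zero] at hL' ⊢
    norm_num at hL' ⊢
    linarith
  simp only [Finset.mem_insert, Finset.mem_singleton]
  omega

/-- A geometric series over the levels `2 ^ k ≤ |s - r|`, plus at most two larger levels. -/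
noncomputable def truncConst (p : ℝ) : ℝ := (1 - ((2:ℝ) ^ p)⁻¹)⁻¹ + 2

lemma truncConst_pos {p : ℝ} (hp : 0 < p) : 0 < truncConst p := by
  have : 0 < 1 - ((2:ℝ) ^ p)⁻¹ :=
    sub_pos.2 (inv_lt_one_of_one_lt₀ (Real.one_lt_rpow one_lt_two hp))
  unfold truncConst; positivity

theorem sum_levelTrunc_sub_rpow_le {p r s : ℝ} (hp : 0 < p) (hrs : r ≤ s) (F : Finset ℤ) :
    ∑ k ∈ F, (levelTrunc (2 ^ k) s - levelTrunc (2 ^ k) r) ^ p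
      ≤ truncConst p * (s - r) ^ p := by
  have hd : 0 ≤ s - r := sub_nonneg.2 hrs
  have hpos : ∀ k : ℤ, (0:ℝ) < 2 ^ k := fun k => zpow_pos two_pos k
  have hnonneg : ∀ k : ℤ, 0 ≤ levelTrunc (2 ^ k) s - levelTrunc (2 ^ k) r :=
    fun k => sub_nonneg.2 (monotone_levelTrunc hrs)
  set M := max (s - r) (r / 2)
  rw [← Finset.sum_filter_add_sum_filter_not F (fun k => (2:ℝ) ^ k ≤ s - r), truncConst,
    add_mul]
  refine add_le_add ?_ ?_
  · calc _ ≤ ∑ k ∈ F.filter (fun k => (2:ℝ) ^ k ≤ s - r), ((2:ℝ) ^ k) ^ p :=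
          Finset.sum_le_sum fun k _ => Real.rpow_le_rpow (hnonneg k)
            ((sub_le_self _ (levelTrunc_nonneg (hpos k).le)).trans levelTrunc_le) hp.le
      _ ≤ _ := sum_zpow_rpow_le hp hd fun k hk => (Finset.mem_filter.1 hk).2
  · -- only the levels `2 ^ k ∈ (M, 4M)` contribute, and each by at most `(s - r) ^ p`
    have hterm : ∀ k ∈ F.filter (fun k => ¬(2:ℝ) ^ k ≤ s - r),
        (levelTrunc (2 ^ k) s - levelTrunc (2 ^ k) r) ^ p
          ≤ if M < (2:ℝ) ^ k ∧ (2:ℝ) ^ k < 4 * M then (s - r) ^ p else 0 := by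
      intro k hk
      have hdk : s - r < 2 ^ k := not_le.1 (Finset.mem_filter.1 hk).2
      split_ifs with hM
      · exact Real.rpow_le_rpow (hnonneg k) (levelTrunc_sub_le hrs) hp.le
      · rw [levelTrunc_sub_eq_zero (hpos k).le hrs, Real.zero_rpow hp.ne']
        by_contra! h
        exact hM ⟨max_lt hdk (by linarith), by
          have := le_max_left (s - r) (r / 2); have := le_max_right (s - r) (r / 2)
          linarith [hpos k]⟩
    calc _ ≤ ∑ k ∈ F.filter (fun k => ¬(2:ℝ) ^ k ≤ s - r),
            if M < (2:ℝ) ^ k ∧ (2:ℝ) ^ k < 4 * M then (s - r) ^ p else 0 :=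
          Finset.sum_le_sum hterm
      _ = _ * (s - r) ^ p := by rw [← Finset.sum_filter, Finset.sum_const, nsmul_eq_mul]
      _ ≤ 2 * (s - r) ^ p := by
          gcongr
          exact_mod_cast card_filter_zpow_mem_Ioo_le_two M _

theorem sum_abs_levelTrunc_sub_rpow_le {p a b : ℝ} (hp : 0 < p) (F : Finset ℤ) :
    ∑ k ∈ F, |levelTrunc (2 ^ k) a - levelTrunc (2 ^ k) b| ^ p
      ≤ truncConst p * |a - b| ^ p := by
  wlog hba : b ≤ a generalizing a b
  · simpa only [abs_sub_comm] using this (le_of_not_ge hba)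
  simp_rw [abs_of_nonneg (sub_nonneg.2 (monotone_levelTrunc hba)), abs_of_nonneg (sub_nonneg.2 hba)]
  exact sum_levelTrunc_sub_rpow_le hp hba F

lemma tsum_lintegral_le_lintegral_tsum {α ι : Type*} [MeasurableSpace α] (μ : Measure α)
    (f : ι → α → ℝ≥0∞) :
    ∑' i, ∫⁻ a, f i a ∂μ ≤ ∫⁻ a, ∑' i, f i a ∂μ := by
  classical
  rw [ENNReal.tsum_eq_iSup_sum]
  refine iSup_le fun F => ?_
  calc ∑ i ∈ F, ∫⁻ a, f i a ∂μ ≤ ∫⁻ a, ∑ i ∈ F, f i a ∂μ := by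
        induction F using Finset.induction_on with
        | empty => simp
        | insert j F hj ih =>
          simp only [Finset.sum_insert hj]
          exact (add_le_add le_rfl ih).trans (le_lintegral_add _ _)
    _ ≤ ∫⁻ a, ∑' i, f i a ∂μ := lintegral_mono fun a => ENNReal.sum_le_tsum F

section FractionalEnergy

variable {n : ℕ} {δ τ p : ℝ} {G : Set (Eucl n)} {u v : Eucl n → ℝ}

lemma fracKernel_eq_mul (x y : Eucl n) :
    fracKernel n δ p u x y
      = ENNReal.ofReal (|u x - u y| ^ p)
          * ENNReal.ofReal (dist x y ^ ((n : ℝ) + δ * p))⁻¹ := by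
  rw [fracKernel, div_eq_mul_inv, ENNReal.ofReal_mul (by positivity)]

lemma fracEnergyTau_neg : fracEnergyTau n δ τ p G (-u) = fracEnergyTau n δ τ p G u := by
  simp only [fracEnergyTau, fracKernel, Pi.neg_apply, neg_sub_neg, abs_sub_comm]

lemma tsum_fracKernel_levelTrunc_le (hp : 0 < p)
    (hvu : ∀ x y, |v x - v y| ≤ |u x - u y|) (x y : Eucl n) :
    ∑' k : ℤ, fracKernel n δ p (fun z => levelTrunc (2 ^ k) (v z)) x y
      ≤ ENNReal.ofReal (truncConst p) * fracKernel n δ p u x y := by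
  simp_rw [fracKernel_eq_mul]
  rw [ENNReal.tsum_mul_right, ← mul_assoc, ← ENNReal.ofReal_mul (truncConst_pos hp).le]
  gcongr
  rw [ENNReal.tsum_eq_iSup_sum]
  refine iSup_le fun F => ?_
  rw [← ENNReal.ofReal_sum_of_nonneg fun k _ => by positivity]
  gcongr
  calc _ ≤ truncConst p * |v x - v y| ^ p := sum_abs_levelTrunc_sub_rpow_le hp F
    _ ≤ truncConst p * |u x - u y| ^ p :=
        mul_le_mul_of_nonneg_left (Real.rpow_le_rpow (abs_nonneg _) (hvu x y) hp.le)
          (truncConst_pos hp).le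

theorem tsum_fracEnergyTau_levelTrunc_le (hp : 0 < p)
    (hvu : ∀ x y, |v x - v y| ≤ |u x - u y|) :
    ∑' k : ℤ, fracEnergyTau n δ τ p G (fun z => levelTrunc (2 ^ k) (v z))
      ≤ ENNReal.ofReal (truncConst p) * fracEnergyTau n δ τ p G u := by
  unfold fracEnergyTau
  calc _ ≤ ∫⁻ x in G, ∑' k : ℤ, ∫⁻ y in tauBall n τ G x,
          fracKernel n δ p (fun z => levelTrunc (2 ^ k) (v z)) x y :=
        tsum_lintegral_le_lintegral_tsum _ _
    _ ≤ ∫⁻ x in G, ∫⁻ y in tauBall n τ G x,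
          ENNReal.ofReal (truncConst p) * fracKernel n δ p u x y :=
        lintegral_mono fun x => (tsum_lintegral_le_lintegral_tsum _ _).trans
          (lintegral_mono fun y => tsum_fracKernel_levelTrunc_le hp hvu x y)
    _ = _ := by simp_rw [lintegral_const_mul' _ _ ENNReal.ofReal_ne_top]

end FractionalEnergy

lemma ENNReal.tsum_rpow_le_rpow_tsum {ι : Type*} (a : ι → ℝ≥0∞) {r : ℝ} (hr : 1 ≤ r) :
    ∑' i, a i ^ r ≤ (∑' i, a i) ^ r := by
  classical
  rw [ENNReal.tsum_eq_iSup_sum]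
  refine iSup_le fun F => ?_
  calc ∑ i ∈ F, a i ^ r ≤ (∑ i ∈ F, a i) ^ r := by
        induction F using Finset.induction_on with
        | empty => simp [ENNReal.zero_rpow_of_pos (zero_lt_one.trans_le hr)]
        | insert j F hj ih =>
          rw [Finset.sum_insert hj, Finset.sum_insert hj]
          exact (add_le_add le_rfl ih).trans (ENNReal.add_rpow_le_rpow_add _ _ hr)
    _ ≤ (∑' i, a i) ^ r := by gcongr; exact ENNReal.sum_le_tsum F

theorem exists_median (ρ : Measure ℝ) [IsFiniteMeasure ρ] :
    ∃ m, ρ (Ioi m) ≤ ρ univ / 2 ∧ ρ (Iio m) ≤ ρ univ / 2 := by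
  rcases eq_or_ne ρ 0 with rfl | hρ
  · exact ⟨0, by simp⟩
  have hhalf : ρ univ / 2 < ρ univ :=
    ENNReal.half_lt_self (by simpa using hρ) (measure_ne_top _ _)
  have hcompl : ∀ {s : Set ℝ}, MeasurableSet s → ρ univ / 2 ≤ ρ s →
      ρ sᶜ ≤ ρ univ / 2 :=
    fun hs h => by
      rw [measure_compl hs (measure_ne_top _ _)]
      exact (tsub_le_tsub_left h _).trans (ENNReal.sub_half (measure_ne_top _ _)).le
  set S := {t | ρ (Ioi t) ≤ ρ univ / 2}
  have hS : S.Nonempty := by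
    obtain ⟨t, ht⟩ := ((tendsto_measure_Iic_atTop ρ).eventually_const_lt hhalf).exists
    exact ⟨t, show ρ (Ioi t) ≤ _ by
      simpa only [compl_Iic] using hcompl measurableSet_Iic ht.le⟩
  have hSb : BddBelow S := by
    obtain ⟨t₀, ht₀⟩ := ((tendsto_measure_Ici_atBot ρ).eventually_const_lt hhalf).exists
    exact ⟨t₀, fun t ht => not_lt.1 fun hlt =>
      (ht₀.trans_le (measure_mono (Ici_subset_Ioi.2 hlt))).not_ge ht⟩
  refine ⟨sInf S, ?_, ?_⟩
  · obtain ⟨x, hx_anti, hx_gt, hx_lim⟩ := exists_seq_strictAnti_tendsto (sInf S)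
    rw [← iUnion_Ici_eq_Ioi_of_lt_of_tendsto hx_gt hx_lim,
      Monotone.measure_iUnion fun i j hij => Ici_subset_Ici.2 (hx_anti.antitone hij)]
    refine iSup_le fun k => ?_
    obtain ⟨s, hs, hsx⟩ := exists_lt_of_csInf_lt hS (hx_gt k)
    exact (measure_mono (Ici_subset_Ioi.2 hsx)).trans hs
  · obtain ⟨y, hy_mono, hy_lt, hy_lim⟩ := exists_seq_strictMono_tendsto (sInf S)
    rw [← iUnion_Iic_eq_Iio_of_lt_of_tendsto hy_lt hy_lim,
      Monotone.measure_iUnion fun i j hij => Iic_subset_Iic.2 (hy_mono.monotone hij)]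
    refine iSup_le fun k => ?_
    have hk : ρ univ / 2 ≤ ρ (Ioi (y k)) :=
      (not_le.1 fun h => (hy_lt k).not_ge (csInf_le hSb h)).le
    simpa only [compl_Ioi] using hcompl measurableSet_Ioi hk

section WeakToStrong

variable {α : Type*} [MeasurableSpace α] {μ : Measure α} {q : ℝ}

theorem exists_median_of_aemeasurable [IsFiniteMeasure μ] {u : α → ℝ}
    (hu : AEMeasurable u μ) :
    ∃ m, μ {x | m < u x} ≤ μ univ / 2 ∧ μ {x | u x < m} ≤ μ univ / 2 := by
  obtain ⟨m, hIoi, hIio⟩ := exists_median (μ.map u)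
  rw [Measure.map_apply_of_aemeasurable hu MeasurableSet.univ] at hIoi hIio
  rw [Measure.map_apply_of_aemeasurable hu measurableSet_Ioi] at hIoi
  rw [Measure.map_apply_of_aemeasurable hu measurableSet_Iio] at hIio
  exact ⟨m, hIoi, hIio⟩

lemma measure_posPart_pos_le [IsFiniteMeasure μ] {u : α → ℝ} (hu : AEMeasurable u μ)
    {m : ℝ} (hm : μ {x | m < u x} ≤ μ univ / 2) :
    μ {x | 0 < max (u x - m) 0} ≤ μ {x | max (u x - m) 0 = 0} := by
  have hnull : NullMeasurableSet {x | m < u x} μ := hu.nullMeasurableSet_preimage measurableSet_Ioi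
  calc μ {x | 0 < max (u x - m) 0} ≤ μ {x | m < u x} :=
        measure_mono fun x (hx : 0 < max (u x - m) 0) => show m < u x by
          rw [lt_max_iff] at hx; rcases hx with hx | hx <;> linarith
    _ ≤ μ univ - μ {x | m < u x} := by
        refine hm.trans ?_
        rw [← ENNReal.sub_half (measure_ne_top μ univ)]
        exact tsub_le_tsub_left hm _
    _ = μ {x | m < u x}ᶜ := (measure_compl₀ hnull (measure_ne_top _ _)).symm
    _ ≤ μ {x | max (u x - m) 0 = 0} :=
        measure_mono fun x (hx : ¬m < u x) => show max (u x - m) 0 = 0 from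
          max_eq_right (by linarith [not_lt.1 hx])

lemma measure_le_measure_levelTrunc_sub {v : α → ℝ} {c : ℝ} (hc : 0 < c)
    (hv : μ {x | 0 < v x} ≤ μ {x | v x = 0}) (a : ℝ) :
    μ {x | 2 * c ≤ v x} ≤ μ {x | c / 4 < |levelTrunc c (v x) - a|} := by
  rcases le_or_gt (c / 2) |a| with ha | ha
  · -- `v` vanishes on at least half the space, where `|levelTrunc c v - a| = |a|` is large
    calc μ {x | 2 * c ≤ v x} ≤ μ {x | 0 < v x} :=
          measure_mono fun x (hx : 2 * c ≤ v x) => show 0 < v x by linarith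
      _ ≤ μ {x | v x = 0} := hv
      _ ≤ _ := measure_mono fun x (hx : v x = 0) => show c / 4 < |levelTrunc c (v x) - a| by
          rw [hx, levelTrunc_of_le hc.le hc.le, zero_sub, abs_neg]; linarith
  · refine measure_mono fun x (hx : 2 * c ≤ v x) => ?_
    show c / 4 < |levelTrunc c (v x) - a|
    rw [levelTrunc_of_two_mul_le hc.le hx]
    have := abs_sub_abs_le_abs_sub c a
    rw [abs_of_pos hc] at this
    linarith

lemma lintegral_rpow_le_tsum_zpow {v : α → ℝ} (hv : AEMeasurable v μ)
    (hv₀ : ∀ x, 0 ≤ v x) (hq : 0 < q) :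
    ∫⁻ x, ENNReal.ofReal (v x ^ q) ∂μ
      ≤ ∑' k : ℤ, ENNReal.ofReal ((4 * 2 ^ k) ^ q) * μ {x | 2 * 2 ^ k ≤ v x} := by
  set A : ℤ → Set α := fun k => v ⁻¹' Ico (2 * 2 ^ k) (4 * 2 ^ k)
  have hA : ∀ k, NullMeasurableSet (A k) μ :=
    fun k => hv.nullMeasurableSet_preimage measurableSet_Ico
  have hpt : ∀ x, ENNReal.ofReal (v x ^ q)
      ≤ ∑' k : ℤ, (A k).indicator (fun _ => ENNReal.ofReal ((4 * 2 ^ k) ^ q)) x := by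
    intro x
    rcases (hv₀ x).eq_or_lt with h | h
    · simp [← h, Real.zero_rpow hq.ne']
    set L := Int.log 2 (v x)
    have hL : (2:ℝ) ^ L ≤ v x := by exact_mod_cast Int.zpow_log_le_self one_lt_two h
    have hL' : v x < (2:ℝ) ^ (L + 1) := by
      exact_mod_cast Int.lt_zpow_succ_log_self one_lt_two (v x)
    have h2 : (2:ℝ) ^ L = 2 * 2 ^ (L - 1) := by
      rw [zpow_sub_one₀ two_ne_zero]; field_simp
    rw [zpow_add_one₀ two_ne_zero, h2] at hL'
    rw [h2] at hL
    refine le_trans ?_ (ENNReal.le_tsum (L - 1))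
    rw [indicator_of_mem (show x ∈ A (L - 1) from ⟨hL, by linarith⟩)]
    exact ENNReal.ofReal_le_ofReal (Real.rpow_le_rpow (hv₀ x) (by linarith) hq.le)
  calc ∫⁻ x, ENNReal.ofReal (v x ^ q) ∂μ
      ≤ ∫⁻ x, ∑' k : ℤ,
          (A k).indicator (fun _ => ENNReal.ofReal ((4 * 2 ^ k) ^ q)) x ∂μ := lintegral_mono hpt
    _ = ∑' k : ℤ, ∫⁻ x,
          (A k).indicator (fun _ => ENNReal.ofReal ((4 * 2 ^ k) ^ q)) x ∂μ :=
        lintegral_tsum fun k => aemeasurable_const.indicator₀ (hA k)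
    _ ≤ _ := by
        refine ENNReal.tsum_le_tsum fun k => ?_
        rw [lintegral_indicator_const₀ (hA k)]
        gcongr _ * ?_
        exact measure_mono fun x hx => hx.1

theorem lintegral_rpow_le_of_weakType {E : (α → ℝ) → ℝ≥0∞} {C : ℝ≥0∞} {r : ℝ}
    (hq : 0 < q) (hr : 1 ≤ r)
    (hweak : ∀ u : α → ℝ, MemLp u ⊤ μ →
      (⨅ a : ℝ, ⨆ (t : ℝ) (_ : 0 < t), μ {x | t < |u x - a|} * ENNReal.ofReal (t ^ q))
        ≤ C * E u ^ r)
    {v : α → ℝ} (hv : AEMeasurable v μ) (hv₀ : ∀ x, 0 ≤ v x)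
    (hvanish : μ {x | 0 < v x} ≤ μ {x | v x = 0}) :
    ∫⁻ x, ENNReal.ofReal (v x ^ q) ∂μ
      ≤ ENNReal.ofReal (16 ^ q) * C
          * (∑' k : ℤ, E fun x => levelTrunc (2 ^ k) (v x)) ^ r := by
  have hlevel : ∀ k : ℤ, ENNReal.ofReal ((2 ^ k / 4) ^ q) * μ {x | 2 * 2 ^ k ≤ v x}
      ≤ C * E (fun x => levelTrunc (2 ^ k) (v x)) ^ r := by
    intro k
    have hc : (0:ℝ) < 2 ^ k := zpow_pos two_pos k
    have hmem : MemLp (fun x => levelTrunc (2 ^ k) (v x)) ⊤ μ :=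
      memLp_top_of_bound
        (continuous_levelTrunc.measurable.comp_aemeasurable hv).aestronglyMeasurable (2 ^ k)
        (ae_of_all _ fun x => by
          rw [Real.norm_eq_abs, abs_of_nonneg (levelTrunc_nonneg hc.le)]; exact levelTrunc_le)
    refine le_trans ?_ (hweak _ hmem)
    refine le_iInf fun a => le_iSup₂_of_le (2 ^ k / 4) (by positivity) ?_
    rw [mul_comm]
    gcongr ?_ * _
    exact measure_le_measure_levelTrunc_sub hc hvanish a
  calc ∫⁻ x, ENNReal.ofReal (v x ^ q) ∂μ
      ≤ ∑' k : ℤ, ENNReal.ofReal ((4 * 2 ^ k) ^ q) * μ {x | 2 * 2 ^ k ≤ v x} :=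
        lintegral_rpow_le_tsum_zpow hv hv₀ hq
    _ = ENNReal.ofReal (16 ^ q)
          * ∑' k : ℤ, ENNReal.ofReal ((2 ^ k / 4) ^ q) * μ {x | 2 * 2 ^ k ≤ v x} := by
        rw [← ENNReal.tsum_mul_left]
        refine tsum_congr fun k => ?_
        rw [← mul_assoc, ← ENNReal.ofReal_mul (by positivity),
          ← Real.mul_rpow (by norm_num) (by positivity)]
        ring_nf
    _ ≤ ENNReal.ofReal (16 ^ q)
          * ∑' k : ℤ, C * E (fun x => levelTrunc (2 ^ k) (v x)) ^ r := by
        gcongr _ * ?_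
        exact ENNReal.tsum_le_tsum hlevel
    _ ≤ _ := by
        rw [ENNReal.tsum_mul_left, mul_assoc]
        gcongr
        exact ENNReal.tsum_rpow_le_rpow_tsum _ hr

theorem iSup_measure_mul_rpow_le_lintegral {u : α → ℝ} (hu : AEMeasurable u μ) (hq : 0 < q)
    (a : ℝ) :
    ⨆ (t : ℝ) (_ : 0 < t), μ {x | t < |u x - a|} * ENNReal.ofReal (t ^ q)
      ≤ ∫⁻ x, ENNReal.ofReal (|u x - a| ^ q) ∂μ := by
  refine iSup₂_le fun t ht => ?_
  calc μ {x | t < |u x - a|} * ENNReal.ofReal (t ^ q)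
      ≤ ENNReal.ofReal (t ^ q)
          * μ {x | ENNReal.ofReal (t ^ q) ≤ ENNReal.ofReal (|u x - a| ^ q)} := by
        rw [mul_comm]
        gcongr _ * ?_
        exact measure_mono fun x (hx : t < |u x - a|) =>
          ENNReal.ofReal_le_ofReal (Real.rpow_le_rpow ht.le hx.le hq.le)
    _ ≤ ∫⁻ x, ENNReal.ofReal (|u x - a| ^ q) ∂μ :=
        mul_meas_ge_le_lintegral₀ (by fun_prop) _

end WeakToStrong

section StrongFromWeak

variable {n : ℕ} {δ τ p q : ℝ} {G : Set (Eucl n)} {μ : Measure (Eucl n)} [IsFiniteMeasure μ]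

lemma lintegral_posPart_rpow_le_of_weakType (hp : 0 < p) (hpq : p ≤ q) {C : ℝ≥0∞}
    (hweak : ∀ u : Eucl n → ℝ, MemLp u ⊤ μ →
      (⨅ a : ℝ, ⨆ (t : ℝ) (_ : 0 < t), μ {x | t < |u x - a|} * ENNReal.ofReal (t ^ q))
        ≤ C * fracEnergyTau n δ τ p G u ^ (q / p))
    {u : Eucl n → ℝ} (hu : AEMeasurable u μ) {m : ℝ}
    (hm : μ {x | m < u x} ≤ μ univ / 2) :
    ∫⁻ x, ENNReal.ofReal (max (u x - m) 0 ^ q) ∂μ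
      ≤ ENNReal.ofReal (16 ^ q) * C
          * (ENNReal.ofReal (truncConst p) * fracEnergyTau n δ τ p G u) ^ (q / p) := by
  have hqp : 1 ≤ q / p := (one_le_div hp).2 hpq
  have hvu : ∀ x y, |max (u x - m) 0 - max (u y - m) 0| ≤ |u x - u y| := fun x y => by
    simpa only [sub_sub_sub_cancel_right] using abs_max_sub_max_le_abs (u x - m) (u y - m) 0
  calc _ ≤ ENNReal.ofReal (16 ^ q) * C
          * (∑' k : ℤ, fracEnergyTau n δ τ p G fun x => levelTrunc (2 ^ k) (max (u x - m) 0))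
            ^ (q / p) :=
        lintegral_rpow_le_of_weakType (hp.trans_le hpq) hqp hweak (by fun_prop)
          (fun x => le_max_right _ _) (measure_posPart_pos_le hu hm)
    _ ≤ _ := by
        gcongr
        exact tsum_fracEnergyTau_levelTrunc_le hp hvu

theorem iInf_lintegral_rpow_le_of_weakType (hp : 0 < p) (hpq : p ≤ q) {C : ℝ}
    (hweak : ∀ u : Eucl n → ℝ, MemLp u ⊤ μ →
      (⨅ a : ℝ, ⨆ (t : ℝ) (_ : 0 < t), μ {x | t < |u x - a|} * ENNReal.ofReal (t ^ q))
        ≤ ENNReal.ofReal C * fracEnergyTau n δ τ p G u ^ (q / p))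
    {u : Eucl n → ℝ} (hu : AEMeasurable u μ) :
    (⨅ a : ℝ, ∫⁻ x, ENNReal.ofReal (|u x - a| ^ q) ∂μ)
      ≤ ENNReal.ofReal (2 * 16 ^ q * truncConst p ^ (q / p) * C)
          * fracEnergyTau n δ τ p G u ^ (q / p) := by
  have hq : 0 < q := hp.trans_le hpq
  obtain ⟨m, hm_gt, hm_lt⟩ := exists_median_of_aemeasurable hu
  have hsplit : ∀ x, ENNReal.ofReal (|u x - m| ^ q)
      = ENNReal.ofReal (max (u x - m) 0 ^ q) + ENNReal.ofReal (max ((-u) x - -m) 0 ^ q) := by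
    intro x
    rcases le_total m (u x) with h | h
    · rw [abs_of_nonneg (sub_nonneg.2 h), max_eq_left (sub_nonneg.2 h),
        max_eq_right (by simp [h]), Real.zero_rpow hq.ne', ENNReal.ofReal_zero, add_zero]
    · rw [abs_of_nonpos (sub_nonpos.2 h), max_eq_right (sub_nonpos.2 h),
        max_eq_left (by simp [h]), Real.zero_rpow hq.ne', ENNReal.ofReal_zero, zero_add,
        Pi.neg_apply, neg_sub, neg_sub_neg]
  have hpos := lintegral_posPart_rpow_le_of_weakType hp hpq hweak hu hm_gt
  have hneg := lintegral_posPart_rpow_le_of_weakType hp hpq hweak hu.neg (m := -m)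
    (by simpa only [Pi.neg_apply, neg_lt_neg_iff] using hm_lt)
  rw [fracEnergyTau_neg] at hneg
  calc (⨅ a : ℝ, ∫⁻ x, ENNReal.ofReal (|u x - a| ^ q) ∂μ)
      ≤ ∫⁻ x, ENNReal.ofReal (|u x - m| ^ q) ∂μ := iInf_le _ m
    _ = (∫⁻ x, ENNReal.ofReal (max (u x - m) 0 ^ q) ∂μ)
          + ∫⁻ x, ENNReal.ofReal (max ((-u) x - -m) 0 ^ q) ∂μ := by
        simp_rw [hsplit]
        exact lintegral_add_left' (by fun_prop) _
    _ ≤ 2 * (ENNReal.ofReal (16 ^ q) * ENNReal.ofReal C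
          * (ENNReal.ofReal (truncConst p) * fracEnergyTau n δ τ p G u) ^ (q / p)) := by
        rw [two_mul]; exact add_le_add hpos hneg
    _ = _ := by
        have := truncConst_pos hp
        rw [ENNReal.mul_rpow_of_nonneg _ _ (by positivity), ENNReal.ofReal_rpow_of_pos this,
          ENNReal.ofReal_mul (by positivity), ENNReal.ofReal_mul (by positivity),
          ENNReal.ofReal_mul (by positivity), ENNReal.ofReal_ofNat]
        ring

end StrongFromWeak

lemma measure_sep_eq_restrict_apply {α : Type*} [MeasurableSpace α] {μ : Measure α} {s : Set α}
    (hs : MeasurableSet s) (P : α → Prop) : μ {x ∈ s | P x} = μ.restrict s {x | P x} := by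
  rw [Measure.restrict_apply' hs, inter_comm]; rfl

/-- For an open set `G ⊆ ℝⁿ` of finite measure, `0 < δ, τ < 1` and
`0 < p ≤ q < ∞`, the weak-type inequality (A) and the strong-type inequality (B) for the
truncated fractional energy are equivalent; in the implication (A) → (B) one can take
`C₂ = C(p,q)·C₁` with `C(p,q)` depending only on `p` and `q`, and in (B) → (A) `C₁ = C₂`. -/
theorem statement4 (p q : ℝ) (hp : 0 < p) (hpq : p ≤ q) :
    ∃ K : ℝ, 0 < K ∧
      ∀ (n : ℕ) (G : Set (Eucl n)), IsOpen G → volume G < ⊤ →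
        ∀ δ τ : ℝ, δ ∈ Ioo (0:ℝ) 1 → τ ∈ Ioo (0:ℝ) 1 →
          (∀ C₁ : ℝ, 0 < C₁ →
            (∀ u : Eucl n → ℝ, MemLp u ⊤ (volume.restrict G) →
              (⨅ a : ℝ, ⨆ (t : ℝ) (_ : 0 < t),
                  volume {x ∈ G | t < |u x - a|} * ENNReal.ofReal (t ^ q))
                ≤ ENNReal.ofReal C₁ * fracEnergyTau n δ τ p G u ^ (q / p)) →
            (∀ u : Eucl n → ℝ, IntegrableOn u G volume →
              (⨅ a : ℝ, ∫⁻ x in G, ENNReal.ofReal (|u x - a| ^ q) ∂volume)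
                ≤ ENNReal.ofReal (K * C₁) * fracEnergyTau n δ τ p G u ^ (q / p))) ∧
          (∀ C₂ : ℝ, 0 < C₂ →
            (∀ u : Eucl n → ℝ, IntegrableOn u G volume →
              (⨅ a : ℝ, ∫⁻ x in G, ENNReal.ofReal (|u x - a| ^ q) ∂volume)
                ≤ ENNReal.ofReal C₂ * fracEnergyTau n δ τ p G u ^ (q / p)) →
            (∀ u : Eucl n → ℝ, MemLp u ⊤ (volume.restrict G) →
              (⨅ a : ℝ, ⨆ (t : ℝ) (_ : 0 < t),
                  volume {x ∈ G | t < |u x - a|} * ENNReal.ofReal (t ^ q))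
                ≤ ENNReal.ofReal C₂ * fracEnergyTau n δ τ p G u ^ (q / p))) := by
  refine ⟨2 * 16 ^ q * truncConst p ^ (q / p), by have := truncConst_pos hp; positivity, ?_⟩
  intro n G hG hGfin δ τ _ _
  have : IsFiniteMeasure (volume.restrict G) := isFiniteMeasure_restrict.2 hGfin.ne
  simp only [measure_sep_eq_restrict_apply hG.measurableSet]
  refine ⟨fun C₁ _ hA u hu => iInf_lintegral_rpow_le_of_weakType hp hpq hA hu.aemeasurable,
    fun C₂ _ hB u hu => le_trans ?_ (hB u (hu.integrable le_top))⟩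
  exact iInf_mono fun a =>
    iSup_measure_mul_rpow_le_lintegral hu.aestronglyMeasurable.aemeasurable (hp.trans_le hpq) a
end

section
/- Suppose G is an open set in ℝⁿ, and let 0 < p < ∞ and 0 < τ, δ < 1 be given. Let K be a compact subset of G. If u is a measurable function on G with |u|_{W^{δ,p}_τ(G)} < ∞, then u ∈ L^p(K), i.e. ∫_K |u(y)|^p dy < ∞. -/
open MeasureTheory Metric Set
open scoped ENNReal NNReal BigOperators

/- Around every point of `K` there is a ball `B` with `B ⊆ G` and `B ⊆ B(x, τ dist(x, ∂G))`
for all `x ∈ B`. On `B × B` the kernel dominates `|u x - u y|^p` up to the constant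
`(2 radius B)^(n + δp)`, so `∫_B ∫_B |u x - u y|^p < ∞`. Fixing a point `x` whose inner integral is
finite, `|u y|^p ≤ 2^p (|u x - u y|^p + |u x|^p)` shows `u ∈ L^p(B)`; compactness of `K` finishes. -/

theorem ofReal_le_infEDist_frontier {n : ℕ} {G : Set (Eucl n)} (hG : IsOpen G) {x : Eucl n}
    {r : ℝ} (hxG : ball x r ⊆ G) : ENNReal.ofReal r ≤ infEDist x (frontier G) := by
  refine le_infEDist.2 fun y hy => ?_
  have hyG : y ∉ G := by
    rw [hG.frontier_eq] at hy
    exact hy.2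
  rw [edist_dist]
  exact ENNReal.ofReal_le_ofReal (not_lt.1 fun h => hyG (hxG (mem_ball'.2 h)))

theorem ball_subset_tauBall {n : ℕ} {τ r : ℝ} (hτ : 0 ≤ τ) {G : Set (Eucl n)} {x : Eucl n}
    (hr : ENNReal.ofReal r ≤ infEDist x (frontier G)) :
    ball x (τ * r) ⊆ tauBall n τ G x := fun y hy =>
  calc edist x y < ENNReal.ofReal (τ * r) := edist_lt_ofReal.2 (mem_ball'.1 hy)
    _ = ENNReal.ofReal τ * ENNReal.ofReal r := ENNReal.ofReal_mul hτ
    _ ≤ ENNReal.ofReal τ * infEDist x (frontier G) := by gcongr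

theorem exists_ball_subset_tauBall {n : ℕ} {G : Set (Eucl n)} (hG : IsOpen G) {τ : ℝ}
    (hτ : τ ∈ Ioc (0:ℝ) 1) {z : Eucl n} (hz : z ∈ G) :
    ∃ ρ > 0, ball z ρ ⊆ G ∧ ∀ x ∈ ball z ρ, ball z ρ ⊆ tauBall n τ G x := by
  obtain ⟨ε, hε, hεG⟩ := Metric.isOpen_iff.1 hG z hz
  have hρε : τ * ε / 4 ≤ ε / 4 := by nlinarith [hτ.2]
  refine ⟨τ * ε / 4, by nlinarith [hτ.1], (ball_subset_ball (by linarith)).trans hεG, ?_⟩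
  intro x hx y hy
  have hxB : ball x (ε - τ * ε / 4) ⊆ ball z ε :=
    ball_subset_ball' (by linarith [mem_ball.1 hx])
  refine ball_subset_tauBall hτ.1.le (ofReal_le_infEDist_frontier hG (hxB.trans hεG)) ?_
  have hxy : dist y x < τ * ε / 2 := by
    linarith [dist_triangle y z x, mem_ball.1 hy, mem_ball'.1 hx]
  exact mem_ball.2 (hxy.trans_le (by nlinarith [hτ.1]))

theorem ofReal_rpow_le_mul_fracKernel {n : ℕ} {δ p R : ℝ} (hδ : 0 ≤ δ) (hp : 0 < p)
    (u : Eucl n → ℝ) {x y : Eucl n} (hxy : dist x y ≤ R) :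
    ENNReal.ofReal (|u x - u y| ^ p) ≤
      ENNReal.ofReal (R ^ ((n : ℝ) + δ * p)) * fracKernel n δ p u x y := by
  rcases eq_or_ne x y with rfl | hne
  · simp [Real.zero_rpow hp.ne']
  have hd : 0 < dist x y := dist_pos.2 hne
  rw [fracKernel, ← ENNReal.ofReal_mul (Real.rpow_nonneg (hd.le.trans hxy) _)]
  refine ENNReal.ofReal_le_ofReal ?_
  calc |u x - u y| ^ p
      = dist x y ^ ((n : ℝ) + δ * p) * (|u x - u y| ^ p / dist x y ^ ((n : ℝ) + δ * p)) := by
        field_simp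
    _ ≤ R ^ ((n : ℝ) + δ * p) * (|u x - u y| ^ p / dist x y ^ ((n : ℝ) + δ * p)) := by
        gcongr

theorem lintegral_ofReal_rpow_lt_top_of_lintegral_lintegral_sub {α : Type*} [MeasurableSpace α]
    {μ : Measure α} [IsFiniteMeasure μ] {v : α → ℝ} (hv : Measurable v) {p : ℝ} (hp : 0 ≤ p)
    (h : ∫⁻ x, ∫⁻ y, ENNReal.ofReal (|v x - v y| ^ p) ∂μ ∂μ < ⊤) :
    ∫⁻ y, ENNReal.ofReal (|v y| ^ p) ∂μ < ⊤ := by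
  rcases eq_zero_or_neZero μ with rfl | _
  · simp
  have hmeas : Measurable fun x => ∫⁻ y, ENNReal.ofReal (|v x - v y| ^ p) ∂μ :=
    Measurable.lintegral_prod_right (f := fun x y => ENNReal.ofReal (|v x - v y| ^ p))
      (by fun_prop)
  obtain ⟨x, hx⟩ := (ae_lt_top hmeas h.ne).exists
  have hpt : ∀ y, ENNReal.ofReal (|v y| ^ p) ≤
      2 ^ p * (ENNReal.ofReal (|v x - v y| ^ p) + ENNReal.ofReal (|v x| ^ p)) := fun y => by
    simp only [← ENNReal.ofReal_rpow_of_nonneg (abs_nonneg _) hp]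
    calc ENNReal.ofReal |v y| ^ p ≤ (ENNReal.ofReal |v x - v y| + ENNReal.ofReal |v x|) ^ p := by
          gcongr
          rw [← ENNReal.ofReal_add (abs_nonneg _) (abs_nonneg _)]
          refine ENNReal.ofReal_le_ofReal ?_
          linarith [abs_sub_abs_le_abs_sub (v y) (v x), abs_sub_comm (v y) (v x)]
      _ ≤ _ := ENNReal.add_rpow_le_two_rpow_mul_rpow_add_rpow _ _ hp
  calc ∫⁻ y, ENNReal.ofReal (|v y| ^ p) ∂μ
      ≤ ∫⁻ y, 2 ^ p * (ENNReal.ofReal (|v x - v y| ^ p) + ENNReal.ofReal (|v x| ^ p)) ∂μ :=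
        lintegral_mono hpt
    _ = 2 ^ p * ((∫⁻ y, ENNReal.ofReal (|v x - v y| ^ p) ∂μ) +
          ENNReal.ofReal (|v x| ^ p) * μ univ) := by
        rw [lintegral_const_mul _ (by fun_prop), lintegral_add_right _ measurable_const,
          lintegral_const]
    _ < ⊤ := by
        have h2 : (2 : ℝ≥0∞) ^ p ≠ ⊤ := ENNReal.rpow_ne_top_of_nonneg hp ENNReal.ofNat_ne_top
        exact ENNReal.mul_lt_top h2.lt_top
          (ENNReal.add_lt_top.2 ⟨hx, ENNReal.mul_lt_top ENNReal.ofReal_lt_top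
            (measure_lt_top μ univ)⟩)

theorem lintegral_ball_ofReal_rpow_lt_top {n : ℕ} {G : Set (Eucl n)} {p τ δ : ℝ} (hp : 0 < p)
    (hδ : 0 ≤ δ) {u : Eucl n → ℝ} (hu : Measurable u) (hfin : fracEnergyTau n δ τ p G u < ⊤)
    {z : Eucl n} {ρ : ℝ} (hBG : ball z ρ ⊆ G)
    (hτ : ∀ x ∈ ball z ρ, ball z ρ ⊆ tauBall n τ G x) :
    ∫⁻ y in ball z ρ, ENNReal.ofReal (|u y| ^ p) < ⊤ := by
  have : IsFiniteMeasure (volume.restrict (ball z ρ)) :=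
    isFiniteMeasure_restrict.2 measure_ball_lt_top.ne
  refine lintegral_ofReal_rpow_lt_top_of_lintegral_lintegral_sub hu hp.le ?_
  set C := ENNReal.ofReal ((2 * ρ) ^ ((n : ℝ) + δ * p))
  have hdiam : ∀ x ∈ ball z ρ, ∀ y ∈ ball z ρ, dist x y ≤ 2 * ρ := fun x hx y hy => by
    linarith [dist_triangle x z y, mem_ball.1 hx, mem_ball'.1 hy]
  calc ∫⁻ x in ball z ρ, ∫⁻ y in ball z ρ, ENNReal.ofReal (|u x - u y| ^ p)
      ≤ ∫⁻ x in ball z ρ, ∫⁻ y in ball z ρ, C * fracKernel n δ p u x y := by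
        refine setLIntegral_mono' measurableSet_ball fun x hx => ?_
        exact setLIntegral_mono' measurableSet_ball fun y hy =>
          ofReal_rpow_le_mul_fracKernel hδ hp u (hdiam x hx y hy)
    _ ≤ ∫⁻ x in G, C * ∫⁻ y in tauBall n τ G x, fracKernel n δ p u x y := by
        refine (setLIntegral_mono' measurableSet_ball fun x hx => ?_).trans
          (lintegral_mono_set hBG)
        rw [lintegral_const_mul' _ _ ENNReal.ofReal_ne_top]
        exact mul_le_mul_right (lintegral_mono_set (hτ x hx)) C
    _ = C * fracEnergyTau n δ τ p G u := lintegral_const_mul' _ _ ENNReal.ofReal_ne_top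
    _ < ⊤ := ENNReal.mul_lt_top ENNReal.ofReal_lt_top hfin

/-- Local `L^p`-integrability: if `G ⊆ ℝⁿ` is open, `0 < p < ∞`,
`0 < τ, δ < 1`, `K ⊆ G` is compact and `u` is a measurable function on `G` with
`|u|_{W^{δ,p}_τ(G)} < ∞`, then `u ∈ L^p(K)`. -/
theorem statement6 (n : ℕ) (G : Set (Eucl n)) (hG : IsOpen G)
    (p τ δ : ℝ) (hp : 0 < p) (hτ : τ ∈ Ioo (0:ℝ) 1) (hδ : δ ∈ Ioo (0:ℝ) 1)
    (K : Set (Eucl n)) (hK : IsCompact K) (hKG : K ⊆ G)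
    (u : Eucl n → ℝ) (hu : Measurable u) (hfin : fracEnergyTau n δ τ p G u < ⊤) :
    (∫⁻ y in K, ENNReal.ofReal (|u y| ^ p) ∂volume) < ⊤ := by
  rw [← withDensity_apply _ hK.measurableSet]
  refine hK.measure_lt_top_of_nhdsWithin fun z hz => ?_
  obtain ⟨ρ, hρ, hBG, hBτ⟩ :=
    exists_ball_subset_tauBall hG (Ioo_subset_Ioc_self hτ) (hKG hz)
  refine ⟨ball z ρ, mem_nhdsWithin_of_mem_nhds (ball_mem_nhds z hρ), ?_⟩
  rw [withDensity_apply _ measurableSet_ball]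
  exact lintegral_ball_ofReal_rpow_lt_top hp hδ.1.le hu hfin hBG hBτ
end

section
/- Fix 1 ≤ p, q < ∞ with 1/p − 1/q = δ/n, δ ∈ [0,1], and u ∈ L¹_loc(ℝⁿ). For a cube Q in ℝⁿ set a(Q) = |u|_{A^{δ,p}_1(Q)} · |Q|^{−1/q}. Then for every cube Q in ℝⁿ and every family 𝒬 of pairwise disjoint cubes contained in Q, the inequality ∑_{P∈𝒬} a(P)^q |P| ≤ 2^{q/p} a(Q)^q |Q| holds. -/
open MeasureTheory Metric Set
open scoped ENNReal NNReal BigOperators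

/-! The key fact is that `G ↦ |u|_{A^{δ,p}_κ(G)}^p` is superadditive over disjoint measurable
sets when `κ ≥ 1`: packings of disjoint sets by cubes combine into a packing of their union,
and the integral of the `p`-th power of the oscillation sum splits over the pieces. Since
`a(P)^q |P| = |u|_{A^{δ,p}_1(P)}^q` and `q ≥ p`, the inclusion `ℓ^p ⊆ ℓ^q` then gives
`∑ a(P)^q |P| ≤ (∑ |u|_{A^{δ,p}_1(P)}^p)^{q/p} ≤ |u|_{A^{δ,p}_1(Q)}^q`. -/

namespace ENNReal

theorem sum_rpow_le_rpow_sum {ι : Type*} (s : Finset ι) (f : ι → ℝ≥0∞) {r : ℝ} (hr : 1 ≤ r) :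
    ∑ i ∈ s, f i ^ r ≤ (∑ i ∈ s, f i) ^ r := by
  classical
  induction s using Finset.induction_on with
  | empty => simp
  | insert a s ha ih =>
    rw [Finset.sum_insert ha, Finset.sum_insert ha]
    exact (add_le_add le_rfl ih).trans (add_rpow_le_rpow_add _ _ hr)

theorem tsum_rpow_le_rpow_tsum_s9 {ι : Type*} (f : ι → ℝ≥0∞) {r : ℝ} (hr : 1 ≤ r) :
    ∑' i, f i ^ r ≤ (∑' i, f i) ^ r := by
  rw [ENNReal.tsum_eq_iSup_sum]
  exact iSup_le fun s => (sum_rpow_le_rpow_sum s f hr).trans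
    (rpow_le_rpow (ENNReal.sum_le_tsum s) (by linarith))

theorem mul_rpow_neg_one_div_rpow_mul_cancel {a b : ℝ≥0∞} {q : ℝ} (hq : 0 < q) (hb₀ : b ≠ 0)
    (hb : b ≠ ⊤) : (a * b ^ (-(1 / q))) ^ q * b = a ^ q := by
  rw [mul_rpow_of_nonneg _ _ hq.le, ← rpow_mul, neg_mul, one_div_mul_cancel hq.ne',
    rpow_neg_one, mul_assoc, ENNReal.inv_mul_cancel hb₀ hb, mul_one]

end ENNReal

section Cube

variable {n : ℕ}

theorem isClosed_cube (z : Eucl n) (r : ℝ) : IsClosed (cube n z r) := by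
  simp only [cube, Set.ofPred_forall]
  exact isClosed_iInter fun i => isClosed_le (by fun_prop) continuous_const

theorem cube_mono (z : Eucl n) {r r' : ℝ} (h : r ≤ r') : cube n z r ⊆ cube n z r' :=
  fun _ hx i => (hx i).trans h

theorem ball_subset_cube (z : Eucl n) (r : ℝ) : ball z r ⊆ cube n z r := fun x hx i =>
  (PiLp.dist_apply_le x z i).trans (mem_ball.mp hx).le

theorem cube_subset_closedBall (z : Eucl n) (r : ℝ) :
    cube n z r ⊆ closedBall z (Real.sqrt (n * r ^ 2)) := by
  intro x hx
  rw [mem_closedBall, EuclideanSpace.dist_eq]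
  refine Real.sqrt_le_sqrt ?_
  calc ∑ i, dist (x i) (z i) ^ 2 ≤ ∑ _i : Fin n, r ^ 2 :=
        Finset.sum_le_sum fun i _ => pow_le_pow_left₀ (abs_nonneg _) (hx i) 2
    _ = n * r ^ 2 := by simp

theorem volume_cube_pos (z : Eucl n) {r : ℝ} (hr : 0 < r) : 0 < volume (cube n z r) :=
  (measure_ball_pos volume z hr).trans_le (measure_mono (ball_subset_cube z r))

theorem volume_cube_ne_top (z : Eucl n) (r : ℝ) : volume (cube n z r) ≠ ⊤ :=
  (measure_mono (cube_subset_closedBall z r)).trans_lt measure_closedBall_lt_top |>.ne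

end Cube

section ASeminorm

open Function

variable {n : ℕ} {κ δ p : ℝ}

def IsCubePacking (n : ℕ) (κ : ℝ) (G : Set (Eucl n)) (F : Set (Eucl n × ℝ)) : Prop :=
  (∀ c ∈ F, 0 < c.2 ∧ cube n c.1 (κ * c.2) ⊆ G) ∧
    ∀ c ∈ F, ∀ c' ∈ F, c ≠ c' → cube n c.1 c.2 ∩ cube n c'.1 c'.2 = ∅

noncomputable def oscillationSum (n : ℕ) (δ : ℝ) (u : Eucl n → ℝ) (F : Set (Eucl n × ℝ))
    (x : Eucl n) : ℝ≥0∞ :=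
  ∑' c : F, (cube n (c : Eucl n × ℝ).1 (c : Eucl n × ℝ).2).indicator
    (fun _ => ENNReal.ofReal (aTerm n δ u (c : Eucl n × ℝ).1 (c : Eucl n × ℝ).2)) x

theorem oscillationSum_mono (u : Eucl n → ℝ) {F F' : Set (Eucl n × ℝ)} (h : F ⊆ F')
    (x : Eucl n) : oscillationSum n δ u F x ≤ oscillationSum n δ u F' x :=
  ENNReal.summable.tsum_le_tsum_of_inj (Set.inclusion h) (Set.inclusion_injective h)
    (fun _ _ => zero_le) (fun _ => le_rfl) ENNReal.summable

theorem IsCubePacking.empty (G : Set (Eucl n)) : IsCubePacking n κ G ∅ := by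
  simp [IsCubePacking]

instance (G : Set (Eucl n)) : Nonempty {F // IsCubePacking n κ G F} :=
  ⟨⟨∅, .empty G⟩⟩

theorem IsCubePacking.mono {G G' : Set (Eucl n)} {F : Set (Eucl n × ℝ)}
    (hF : IsCubePacking n κ G F) (h : G ⊆ G') : IsCubePacking n κ G' F :=
  ⟨fun c hc => ⟨(hF.1 c hc).1, (hF.1 c hc).2.trans h⟩, hF.2⟩

theorem IsCubePacking.cube_subset (hκ : 1 ≤ κ) {G : Set (Eucl n)} {F : Set (Eucl n × ℝ)}
    (hF : IsCubePacking n κ G F) {c : Eucl n × ℝ} (hc : c ∈ F) : cube n c.1 c.2 ⊆ G :=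
  (cube_mono c.1 (le_mul_of_one_le_left (hF.1 c hc).1.le hκ)).trans (hF.1 c hc).2

theorem IsCubePacking.union (hκ : 1 ≤ κ) {G₁ G₂ : Set (Eucl n)} {F₁ F₂ : Set (Eucl n × ℝ)}
    (hF₁ : IsCubePacking n κ G₁ F₁) (hF₂ : IsCubePacking n κ G₂ F₂) (hG : Disjoint G₁ G₂) :
    IsCubePacking n κ (G₁ ∪ G₂) (F₁ ∪ F₂) := by
  refine ⟨fun c hc => ?_, fun c hc c' hc' hne => ?_⟩
  · rcases hc with hc | hc
    · exact ⟨(hF₁.1 c hc).1, (hF₁.1 c hc).2.trans subset_union_left⟩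
    · exact ⟨(hF₂.1 c hc).1, (hF₂.1 c hc).2.trans subset_union_right⟩
  · have cross : ∀ {d d'}, d ∈ F₁ → d' ∈ F₂ → cube n d.1 d.2 ∩ cube n d'.1 d'.2 = ∅ :=
      fun hd hd' => disjoint_iff_inter_eq_empty.mp
        (hG.mono (hF₁.cube_subset hκ hd) (hF₂.cube_subset hκ hd'))
    rcases hc with hc | hc <;> rcases hc' with hc' | hc'
    · exact hF₁.2 c hc c' hc' hne
    · exact cross hc hc'
    · rw [inter_comm]; exact cross hc' hc
    · exact hF₂.2 c hc c' hc' hne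

theorem ASeminorm_eq_iSup_isCubePacking (G : Set (Eucl n)) (u : Eucl n → ℝ) :
    ASeminorm n κ δ p G u = ⨆ F : {F // IsCubePacking n κ G F},
      (∫⁻ x in G, oscillationSum n δ u F x ^ p) ^ (1 / p) := by
  simp only [iSup_subtype, IsCubePacking, iSup_and]
  rfl

theorem ASeminorm_rpow (hp : 0 < p) (G : Set (Eucl n)) (u : Eucl n → ℝ) :
    ASeminorm n κ δ p G u ^ p =
      ⨆ F : {F // IsCubePacking n κ G F}, ∫⁻ x in G, oscillationSum n δ u F x ^ p := by
  rw [ASeminorm_eq_iSup_isCubePacking]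
  refine ((ENNReal.orderIsoRpow p hp).map_iSup _).trans (iSup_congr fun F => ?_)
  simp [ENNReal.orderIsoRpow, ← ENNReal.rpow_mul, inv_mul_cancel₀ hp.ne']

theorem ASeminorm_mono (hp : 0 < p) {G G' : Set (Eucl n)} (u : Eucl n → ℝ) (h : G ⊆ G') :
    ASeminorm n κ δ p G u ≤ ASeminorm n κ δ p G' u := by
  rw [← ENNReal.rpow_le_rpow_iff hp, ASeminorm_rpow hp, ASeminorm_rpow hp]
  exact iSup_le fun F => (lintegral_mono_set h).trans
    (le_iSup_of_le ⟨F, F.2.mono h⟩ le_rfl)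

theorem ASeminorm_rpow_add_le (hκ : 1 ≤ κ) (hp : 0 < p) {G₁ G₂ : Set (Eucl n)}
    (hG₂ : MeasurableSet G₂) (hG : Disjoint G₁ G₂) (u : Eucl n → ℝ) :
    ASeminorm n κ δ p G₁ u ^ p + ASeminorm n κ δ p G₂ u ^ p ≤
      ASeminorm n κ δ p (G₁ ∪ G₂) u ^ p := by
  simp only [ASeminorm_rpow hp]
  refine ENNReal.iSup_add_iSup_le fun F₁ F₂ => ?_
  let F : {F // IsCubePacking n κ (G₁ ∪ G₂) F} := ⟨F₁ ∪ F₂, F₁.2.union hκ F₂.2 hG⟩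
  calc (∫⁻ x in G₁, oscillationSum n δ u F₁ x ^ p) + ∫⁻ x in G₂, oscillationSum n δ u F₂ x ^ p
      ≤ (∫⁻ x in G₁, oscillationSum n δ u F x ^ p) +
          ∫⁻ x in G₂, oscillationSum n δ u F x ^ p := by
        gcongr <;> exact oscillationSum_mono u (by simp [F]) _
    _ = ∫⁻ x in G₁ ∪ G₂, oscillationSum n δ u F x ^ p := (lintegral_union hG₂ hG).symm
    _ ≤ _ := le_iSup_of_le F le_rfl

theorem sum_ASeminorm_rpow_le {ι : Type*} (hκ : 1 ≤ κ) (hp : 0 < p) {G : ι → Set (Eucl n)}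
    (hG : ∀ i, MeasurableSet (G i)) (hdisj : Pairwise (Disjoint on G)) (u : Eucl n → ℝ)
    (s : Finset ι) :
    ∑ i ∈ s, ASeminorm n κ δ p (G i) u ^ p ≤ ASeminorm n κ δ p (⋃ i ∈ s, G i) u ^ p := by
  classical
  induction s using Finset.induction_on with
  | empty => simp
  | insert a s ha ih =>
    rw [Finset.sum_insert ha, Finset.set_biUnion_insert]
    refine (add_le_add le_rfl ih).trans (ASeminorm_rpow_add_le hκ hp
      (Finset.measurableSet_biUnion s fun i _ => hG i) ?_ u)
    exact disjoint_iUnion₂_right.mpr fun i hi => hdisj (ne_of_mem_of_not_mem hi ha).symm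

theorem tsum_ASeminorm_rpow_le {ι : Type*} (hκ : 1 ≤ κ) (hp : 0 < p) {G : Set (Eucl n)}
    {Gs : ι → Set (Eucl n)} (hGs : ∀ i, MeasurableSet (Gs i)) (hdisj : Pairwise (Disjoint on Gs))
    (hsub : ∀ i, Gs i ⊆ G) (u : Eucl n → ℝ) :
    ∑' i, ASeminorm n κ δ p (Gs i) u ^ p ≤ ASeminorm n κ δ p G u ^ p := by
  rw [ENNReal.tsum_eq_iSup_sum]
  exact iSup_le fun s => (sum_ASeminorm_rpow_le hκ hp hGs hdisj u s).trans <|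
    ENNReal.rpow_le_rpow (ASeminorm_mono hp u (iUnion₂_subset fun i _ => hsub i)) hp.le

end ASeminorm

theorem statement9_general (n : ℕ) (δ p q : ℝ) (hδ : δ ∈ Icc (0:ℝ) 1)
    (hp : 1 ≤ p) (hq : 1 ≤ q) (hpq : 1 / p - 1 / q = δ / n)
    (u : Eucl n → ℝ)
    (z : Eucl n) (r : ℝ) (hr : 0 < r) (𝒬 : Set (Eucl n × ℝ))
    (h𝒬 : ∀ c ∈ 𝒬, 0 < c.2 ∧ cube n c.1 c.2 ⊆ cube n z r)
    (hdisj : ∀ c ∈ 𝒬, ∀ c' ∈ 𝒬, c ≠ c' → cube n c.1 c.2 ∩ cube n c'.1 c'.2 = ∅) :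
    (∑' c : 𝒬,
        (ASeminorm n 1 δ p (cube n (c : Eucl n × ℝ).1 (c : Eucl n × ℝ).2) u *
            volume (cube n (c : Eucl n × ℝ).1 (c : Eucl n × ℝ).2) ^ (-(1 / q))) ^ q *
          volume (cube n (c : Eucl n × ℝ).1 (c : Eucl n × ℝ).2))
      ≤ (2 : ℝ≥0∞) ^ (q / p) *
          (ASeminorm n 1 δ p (cube n z r) u * volume (cube n z r) ^ (-(1 / q))) ^ q *
          volume (cube n z r) := by
  have hp₀ : 0 < p := one_pos.trans_le hp
  have hq₀ : 0 < q := one_pos.trans_le hq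
  have hqp : 1 ≤ q / p := by
    have : 1 / q ≤ 1 / p := by linarith [div_nonneg hδ.1 n.cast_nonneg]
    exact (one_le_div hp₀).mpr (le_of_one_div_le_one_div hq₀ this)
  have hvol : ∀ {z' : Eucl n} {r' : ℝ}, 0 < r' → ∀ A : ℝ≥0∞,
      (A * volume (cube n z' r') ^ (-(1 / q))) ^ q * volume (cube n z' r') = A ^ q :=
    fun hr' _ => ENNReal.mul_rpow_neg_one_div_rpow_mul_cancel hq₀
      (volume_cube_pos _ hr').ne' (volume_cube_ne_top _ _)
  have hcubes : Pairwise (Function.onFun Disjoint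
      fun c : 𝒬 => cube n (c : Eucl n × ℝ).1 (c : Eucl n × ℝ).2) :=
    fun c c' hne => disjoint_iff_inter_eq_empty.mpr
      (hdisj c c.prop c' c'.prop (Subtype.coe_injective.ne hne))
  rw [mul_assoc, hvol hr, tsum_congr fun c : 𝒬 => hvol (h𝒬 c c.prop).1 _]
  calc ∑' c : 𝒬, ASeminorm n 1 δ p (cube n (c : Eucl n × ℝ).1 (c : Eucl n × ℝ).2) u ^ q
      = ∑' c : 𝒬, (ASeminorm n 1 δ p (cube n (c : Eucl n × ℝ).1 (c : Eucl n × ℝ).2) u ^ p)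
          ^ (q / p) := by
        simp only [← ENNReal.rpow_mul, mul_div_cancel₀ q hp₀.ne']
    _ ≤ (∑' c : 𝒬, ASeminorm n 1 δ p (cube n (c : Eucl n × ℝ).1 (c : Eucl n × ℝ).2) u ^ p)
          ^ (q / p) := ENNReal.tsum_rpow_le_rpow_tsum_s9 _ hqp
    _ ≤ (ASeminorm n 1 δ p (cube n z r) u ^ p) ^ (q / p) := by
        gcongr
        exact tsum_ASeminorm_rpow_le le_rfl hp₀ (fun _ => (isClosed_cube _ _).measurableSet) hcubes
          (fun c => (h𝒬 c c.prop).2) u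
    _ ≤ _ := by
        rw [← ENNReal.rpow_mul, mul_div_cancel₀ q hp₀.ne']
        exact le_mul_of_one_le_left' (ENNReal.one_le_rpow one_le_two (by positivity))

/-- For `1 ≤ p, q < ∞` with `1/p - 1/q = δ/n`, `δ ∈ [0,1]`, and
`u ∈ L¹_loc(ℝⁿ)`, define `a(Q) = |u|_{A^{δ,p}_1(Q)} |Q|^{-1/q}` for cubes `Q`. Then for
every cube `Q` and every family `𝒬` of pairwise disjoint cubes contained in `Q`,
`∑_{P ∈ 𝒬} a(P)^q |P| ≤ 2^{q/p} a(Q)^q |Q|`. -/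
theorem statement9 (n : ℕ) (δ p q : ℝ) (hδ : δ ∈ Icc (0:ℝ) 1)
    (hp : 1 ≤ p) (hq : 1 ≤ q) (hpq : 1 / p - 1 / q = δ / n)
    (u : Eucl n → ℝ) (hu : LocallyIntegrable u volume)
    (z : Eucl n) (r : ℝ) (hr : 0 < r) (𝒬 : Set (Eucl n × ℝ))
    (h𝒬 : ∀ c ∈ 𝒬, 0 < c.2 ∧ cube n c.1 c.2 ⊆ cube n z r)
    (hdisj : ∀ c ∈ 𝒬, ∀ c' ∈ 𝒬, c ≠ c' → cube n c.1 c.2 ∩ cube n c'.1 c'.2 = ∅) :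
    (∑' c : 𝒬,
        (ASeminorm n 1 δ p (cube n (c : Eucl n × ℝ).1 (c : Eucl n × ℝ).2) u *
            volume (cube n (c : Eucl n × ℝ).1 (c : Eucl n × ℝ).2) ^ (-(1 / q))) ^ q *
          volume (cube n (c : Eucl n × ℝ).1 (c : Eucl n × ℝ).2))
      ≤ (2 : ℝ≥0∞) ^ (q / p) *
          (ASeminorm n 1 δ p (cube n z r) u * volume (cube n z r) ^ (-(1 / q))) ^ q *
          volume (cube n z r) :=
  statement9_general n δ p q hδ hp hq hpq u z r hr 𝒬 h𝒬 hdisj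
end

section
/- Let 0 < δ < 1 and 0 < p ≤ q < ∞, and let G be a proper open subset of ℝⁿ. Then the fractional (δ,q,p)-Hardy inequality holds in G (with some constant) if and only if there is a constant C > 0 such that the inequality ∫_K dist(x, ∂G)^{−q(δ + n(1/q − 1/p))} dx ≤ C · cap_{δ,p}(K, G)^{q/p} holds for every compact set K in G. -/
open MeasureTheory Metric Set
open scoped ENNReal NNReal BigOperators

/-! ### Auxiliary lemmas -/

noncomputable section
namespace S11

/-- dyadic truncation piece -/
def tr (j : ℤ) (s : ℝ) : ℝ := min s ((2:ℝ) ^ ((j:ℝ))) - min s ((2:ℝ) ^ ((j:ℝ) - 1))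

lemma two_rpow_pos (x : ℝ) : 0 < (2:ℝ) ^ x := Real.rpow_pos_of_pos two_pos x

lemma two_rpow_lt {x y : ℝ} (h : x < y) : (2:ℝ) ^ x < (2:ℝ) ^ y :=
  Real.rpow_lt_rpow_of_exponent_lt one_lt_two h

lemma two_rpow_le {x y : ℝ} (h : x ≤ y) : (2:ℝ) ^ x ≤ (2:ℝ) ^ y :=
  Real.rpow_le_rpow_of_exponent_le one_le_two h

lemma two_rpow_succ (x : ℝ) : (2:ℝ) ^ (x + 1) = 2 * (2:ℝ) ^ x := by
  rw [Real.rpow_add two_pos, Real.rpow_one, mul_comm]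

lemma tr_nonneg (j : ℤ) (s : ℝ) : 0 ≤ tr j s := by
  have := two_rpow_le (show (j:ℝ) - 1 ≤ (j:ℝ) by linarith)
  simp only [tr, sub_nonneg]
  exact min_le_min le_rfl this

lemma tr_zero (j : ℤ) : tr j 0 = 0 := by
  have h1 : (0:ℝ) ≤ (2:ℝ) ^ ((j:ℝ)) := (two_rpow_pos _).le
  have h2 : (0:ℝ) ≤ (2:ℝ) ^ ((j:ℝ) - 1) := (two_rpow_pos _).le
  rw [tr, min_eq_left h1, min_eq_left h2, sub_self]

lemma tr_le (j : ℤ) (s : ℝ) : tr j s ≤ (2:ℝ) ^ ((j:ℝ) - 1) := by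
  have h2 : (2:ℝ) ^ ((j:ℝ)) = (2:ℝ) ^ ((j:ℝ) - 1) + (2:ℝ) ^ ((j:ℝ) - 1) := by
    rw [show (j:ℝ) = ((j:ℝ) - 1) + 1 by ring, two_rpow_succ]; ring
  simp only [tr]
  rcases le_total s ((2:ℝ) ^ ((j:ℝ) - 1)) with h | h
  · have h' : s ≤ (2:ℝ) ^ ((j:ℝ)) := by nlinarith [two_rpow_pos ((j:ℝ)-1)]
    rw [min_eq_left h, min_eq_left h']; linarith [two_rpow_pos ((j:ℝ)-1)]
  · rw [min_eq_right h]
    have : min s ((2:ℝ)^((j:ℝ))) ≤ (2:ℝ)^((j:ℝ)) := min_le_right _ _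
    linarith [h2]

lemma tr_mono (j : ℤ) {s t : ℝ} (h : s ≤ t) : tr j s ≤ tr j t := by
  have := two_rpow_le (show (j:ℝ) - 1 ≤ (j:ℝ) by linarith)
  simp only [tr, min_def]
  split_ifs <;> linarith

lemma tr_diff_le (j : ℤ) {s t : ℝ} (h : s ≤ t) : tr j t - tr j s ≤ t - s := by
  simp only [tr, min_def]
  split_ifs <;> linarith

lemma tr_eq_zero (j : ℤ) {s : ℝ} (h : s ≤ (2:ℝ) ^ ((j:ℝ) - 1)) : tr j s = 0 := by
  have := two_rpow_le (show (j:ℝ) - 1 ≤ (j:ℝ) by linarith)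
  simp only [tr, min_eq_left h, min_eq_left (h.trans this), sub_self]

lemma tr_eq_of_ge (j : ℤ) {s : ℝ} (h : (2:ℝ) ^ ((j:ℝ)) ≤ s) :
    tr j s = (2:ℝ) ^ ((j:ℝ) - 1) := by
  have h2 : (2:ℝ) ^ ((j:ℝ)) = (2:ℝ) ^ ((j:ℝ) - 1) + (2:ℝ) ^ ((j:ℝ) - 1) := by
    rw [show (j:ℝ) = ((j:ℝ) - 1) + 1 by ring, two_rpow_succ]; ring
  have h1 : (2:ℝ) ^ ((j:ℝ) - 1) ≤ s := by nlinarith [two_rpow_pos ((j:ℝ)-1)]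
  simp only [tr, min_eq_right h, min_eq_right h1]; linarith

/-- the constant in the truncation lemma -/
def Cp (p : ℝ) : ℝ := (1 - (2:ℝ) ^ (-p))⁻¹ + 2

lemma Cp_pos {p : ℝ} (hp : 0 < p) : 0 < Cp p := by
  have h1 : (2:ℝ) ^ (-p) < 1 := by
    have := two_rpow_lt (show -p < 0 by linarith)
    simpa [Real.rpow_zero] using this
  have : 0 < (1 - (2:ℝ) ^ (-p))⁻¹ := inv_pos.2 (by linarith)
  unfold Cp; linarith

lemma lemmaA {p : ℝ} (hp : 0 < p) {a b : ℝ} (ha : 0 ≤ a) (hab : a ≤ b) :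
    ∑' j : ℤ, ENNReal.ofReal ((tr j b - tr j a) ^ p)
      ≤ ENNReal.ofReal (Cp p) * ENNReal.ofReal ((b - a) ^ p) := by
  rcases eq_or_lt_of_le hab with rfl | hlt
  · simp [Real.zero_rpow hp.ne']
  set d : ℝ := b - a with hd
  have hdpos : 0 < d := by simp [hd]; linarith
  have hbpos : 0 < b := lt_of_le_of_lt ha hlt
  set J : ℤ := ⌊Real.logb 2 d⌋ + 1 with hJ
  set M : ℤ := ⌊Real.logb 2 b⌋ + 1 with hM
  have hF1 : ∀ j : ℤ, j ≤ J → (2:ℝ) ^ ((j:ℝ) - 1) ≤ d := by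
    intro j hj
    have h1 : ((j:ℝ) - 1) ≤ Real.logb 2 d := by
      have h0 : (j:ℝ) ≤ (J:ℝ) := by exact_mod_cast hj
      have h2 : (⌊Real.logb 2 d⌋ : ℝ) ≤ Real.logb 2 d := Int.floor_le _
      have h4 : (J:ℝ) = (⌊Real.logb 2 d⌋ : ℝ) + 1 := by rw [hJ]; push_cast; ring
      linarith
    calc (2:ℝ) ^ ((j:ℝ)-1) ≤ (2:ℝ) ^ (Real.logb 2 d) := two_rpow_le h1
      _ = d := Real.rpow_logb two_pos (by norm_num) hdpos
  have hF2 : ∀ j : ℤ, J < j → d < (2:ℝ) ^ ((j:ℝ) - 1) := by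
    intro j hj
    have h1 : Real.logb 2 d < (j:ℝ) - 1 := by
      have h2 : Real.logb 2 d < (⌊Real.logb 2 d⌋ : ℝ) + 1 := Int.lt_floor_add_one _
      have h3 : (J:ℝ) + 1 ≤ (j:ℝ) := by exact_mod_cast (by omega : J + 1 ≤ j)
      have h4 : (J:ℝ) = (⌊Real.logb 2 d⌋ : ℝ) + 1 := by rw [hJ]; push_cast; ring
      linarith
    calc d = (2:ℝ) ^ (Real.logb 2 d) := (Real.rpow_logb two_pos (by norm_num) hdpos).symm
      _ < _ := two_rpow_lt h1
  have hF3 : ∀ j : ℤ, M < j → b < (2:ℝ) ^ ((j:ℝ) - 1) := by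
    intro j hj
    have h1 : Real.logb 2 b < (j:ℝ) - 1 := by
      have h2 : Real.logb 2 b < (⌊Real.logb 2 b⌋ : ℝ) + 1 := Int.lt_floor_add_one _
      have h3 : (M:ℝ) + 1 ≤ (j:ℝ) := by exact_mod_cast (by omega : M + 1 ≤ j)
      have h4 : (M:ℝ) = (⌊Real.logb 2 b⌋ : ℝ) + 1 := by rw [hM]; push_cast; ring
      linarith
    calc b = (2:ℝ) ^ (Real.logb 2 b) := (Real.rpow_logb two_pos (by norm_num) hbpos).symm
      _ < _ := two_rpow_lt h1
  have hF4 : ∀ j : ℤ, j ≤ M - 2 → (2:ℝ) ^ ((j:ℝ) + 1) ≤ b := by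
    intro j hj
    have h1 : ((j:ℝ) + 1) ≤ Real.logb 2 b := by
      have h2 : (⌊Real.logb 2 b⌋ : ℝ) ≤ Real.logb 2 b := Int.floor_le _
      have h3 : (j:ℝ) + 2 ≤ (M:ℝ) := by exact_mod_cast (by omega : j + 2 ≤ M)
      have h4 : (M:ℝ) = (⌊Real.logb 2 b⌋ : ℝ) + 1 := by rw [hM]; push_cast; ring
      linarith
    calc (2:ℝ) ^ ((j:ℝ)+1) ≤ (2:ℝ) ^ (Real.logb 2 b) := two_rpow_le h1
      _ = b := Real.rpow_logb two_pos (by norm_num) hbpos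
  -- dominating functions
  set D : ℝ≥0∞ := ENNReal.ofReal (d ^ p) with hD
  set g : ℤ → ℝ≥0∞ := fun j => if j ≤ J then ENNReal.ofReal (((2:ℝ) ^ ((j:ℝ) - 1)) ^ p) else 0 with hg
  set h : ℤ → ℝ≥0∞ := fun j => (if j = M - 1 then D else 0) + (if j = M then D else 0) with hh
  have hdom : ∀ j : ℤ, ENNReal.ofReal ((tr j b - tr j a) ^ p) ≤ g j + h j := by
    intro j
    have hΔ0 : 0 ≤ tr j b - tr j a := sub_nonneg.2 (tr_mono j hab)
    by_cases hjJ : j ≤ J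
    · have h1 : tr j b - tr j a ≤ (2:ℝ) ^ ((j:ℝ) - 1) := by
        have := tr_le j b; have := tr_nonneg j a; linarith
      have : ENNReal.ofReal ((tr j b - tr j a) ^ p) ≤ g j := by
        simp only [hg, if_pos hjJ]
        exact ENNReal.ofReal_le_ofReal (Real.rpow_le_rpow hΔ0 h1 hp.le)
      exact this.trans le_self_add
    · push_neg at hjJ
      by_cases hjM : j = M - 1 ∨ j = M
      · have h1 : tr j b - tr j a ≤ d := by
          have := tr_diff_le j hab; linarith
        have : ENNReal.ofReal ((tr j b - tr j a) ^ p) ≤ D := by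
          exact ENNReal.ofReal_le_ofReal (Real.rpow_le_rpow hΔ0 h1 hp.le)
        refine le_trans ?_ le_add_self
        simp only [hh]
        rcases hjM with h2 | h2
        · exact this.trans (by simp [h2])
        · exact this.trans (by simp [h2])
      · push_neg at hjM
        have hzero : tr j b - tr j a = 0 := by
          rcases lt_or_ge M j with hM1 | hM2
          · have hb' := (hF3 j hM1).le
            have ha' : a ≤ (2:ℝ) ^ ((j:ℝ) - 1) := le_trans hab hb'
            rw [tr_eq_zero j hb', tr_eq_zero j ha', sub_self]
          · have hjM2 : j ≤ M - 2 := by omega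
            by_cases hac : a < (2:ℝ) ^ ((j:ℝ))
            · exfalso
              have h1 : (2:ℝ) ^ ((j:ℝ) + 1) ≤ b := hF4 j hjM2
              have h2 : d < (2:ℝ) ^ ((j:ℝ) - 1) := hF2 j hjJ
              have h3 : (2:ℝ) ^ ((j:ℝ) + 1) = 2 * (2:ℝ) ^ ((j:ℝ)) := by
                rw [Real.rpow_add two_pos, Real.rpow_one, mul_comm]
              have h4 : (2:ℝ) ^ ((j:ℝ) - 1) ≤ (2:ℝ) ^ ((j:ℝ)) := two_rpow_le (by linarith)
              have : (2:ℝ) ^ ((j:ℝ)) < d := by simp only [hd]; nlinarith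
              linarith
            · push_neg at hac
              have hbc : (2:ℝ) ^ ((j:ℝ)) ≤ b := le_trans hac hab
              rw [tr_eq_of_ge j hbc, tr_eq_of_ge j hac, sub_self]
        rw [hzero, Real.zero_rpow hp.ne']
        simp
  calc ∑' j : ℤ, ENNReal.ofReal ((tr j b - tr j a) ^ p)
      ≤ ∑' j : ℤ, (g j + h j) := ENNReal.tsum_le_tsum hdom
    _ = (∑' j : ℤ, g j) + ∑' j : ℤ, h j := ENNReal.tsum_add
    _ ≤ ENNReal.ofReal ((1 - (2:ℝ) ^ (-p))⁻¹) * D + 2 * D := by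
        gcongr
        · have hinj : Function.Injective (fun k : ℕ => J - (k : ℤ)) := by
            intro k1 k2 hk; simpa using hk
          have hsupp : Function.support g ⊆ Set.range (fun k : ℕ => J - (k : ℤ)) := by
            intro j hj
            by_contra hnot
            apply hj
            have : ¬ j ≤ J := by
              intro hle
              exact hnot ⟨(J - j).toNat, by simp; omega⟩
            simp only [hg, if_neg this]
          rw [← Function.Injective.tsum_eq hinj hsupp]
          have hterm : ∀ k : ℕ, g (J - (k:ℤ)) =
              ENNReal.ofReal (((2:ℝ) ^ ((J:ℝ) - 1)) ^ p) * (ENNReal.ofReal ((2:ℝ) ^ (-p)))^k := by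
            intro k
            have hle : J - (k:ℤ) ≤ J := by omega
            simp only [hg, if_pos hle]
            rw [← ENNReal.ofReal_pow (le_of_lt (two_rpow_pos _)),
              ← ENNReal.ofReal_mul (by positivity)]
            congr 1
            rw [← Real.rpow_natCast ((2:ℝ) ^ (-p)) k, ← Real.rpow_mul (by norm_num),
              ← Real.rpow_mul (by norm_num) _ p, ← Real.rpow_mul (by norm_num),
              ← Real.rpow_add two_pos]
            congr 1
            push_cast
            ring
          rw [tsum_congr hterm, ENNReal.tsum_mul_left, ENNReal.tsum_geometric]
          have h2p : (2:ℝ) ^ (-p) < 1 := by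
            have := two_rpow_lt (show -p < 0 by linarith)
            simpa [Real.rpow_zero] using this
          have hsub : (1 : ℝ≥0∞) - ENNReal.ofReal ((2:ℝ) ^ (-p)) = ENNReal.ofReal (1 - (2:ℝ) ^ (-p)) := by
            rw [ENNReal.ofReal_sub _ (le_of_lt (two_rpow_pos _)), ENNReal.ofReal_one]
          rw [hsub, ← ENNReal.ofReal_inv_of_pos (by linarith)]
          rw [mul_comm]
          gcongr
          exact ENNReal.ofReal_le_ofReal
            (Real.rpow_le_rpow (le_of_lt (two_rpow_pos _)) (hF1 J le_rfl) hp.le)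
        · simp only [hh]
          rw [ENNReal.tsum_add, tsum_ite_eq, tsum_ite_eq, two_mul]
    _ = ENNReal.ofReal (Cp p) * D := by
        have h2p : (2:ℝ) ^ (-p) < 1 := by
          have := two_rpow_lt (show -p < 0 by linarith)
          simpa [Real.rpow_zero] using this
        rw [Cp, ENNReal.ofReal_add (inv_nonneg.2 (by linarith)) (by norm_num), add_mul]
        norm_num

lemma lemmaA' {p : ℝ} (hp : 0 < p) {a b : ℝ} (ha : 0 ≤ a) (hb : 0 ≤ b) :
    ∑' j : ℤ, ENNReal.ofReal (|tr j a - tr j b| ^ p)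
      ≤ ENNReal.ofReal (Cp p) * ENNReal.ofReal (|a - b| ^ p) := by
  rcases le_total a b with h | h
  · have e1 : ∀ j : ℤ, |tr j a - tr j b| = tr j b - tr j a := fun j => by
      rw [abs_sub_comm, abs_of_nonneg (sub_nonneg.2 (tr_mono j h))]
    have e2 : |a - b| = b - a := by rw [abs_sub_comm, abs_of_nonneg (sub_nonneg.2 h)]
    simp_rw [e1, e2]
    exact lemmaA hp ha h
  · have e1 : ∀ j : ℤ, |tr j a - tr j b| = tr j a - tr j b := fun j => by
      rw [abs_of_nonneg (sub_nonneg.2 (tr_mono j h))]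
    have e2 : |a - b| = a - b := by rw [abs_of_nonneg (sub_nonneg.2 h)]
    simp_rw [e1, e2]
    exact lemmaA hp hb h

lemma tsum_rpow_le {r : ℝ} (hr : 1 ≤ r) (f : ℤ → ℝ≥0∞) :
    (∑' j, f j ^ r) ≤ (∑' j, f j) ^ r := by
  set S := ∑' j, f j with hS
  rcases eq_or_ne S ⊤ with hST | hST
  · rw [hST, ENNReal.top_rpow_of_pos (by linarith)]; exact le_top
  rcases eq_or_ne S 0 with hS0 | hS0
  · have h0 : ∀ j, f j = 0 := ENNReal.tsum_eq_zero.1 hS0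
    have : ∀ j : ℤ, f j ^ r = 0 := fun j => by
      rw [h0 j, ENNReal.zero_rpow_of_pos (by linarith)]
    simp [this]
  · have hpt : ∀ j, f j ^ r ≤ S ^ (r - 1) * f j := by
      intro j
      rcases eq_or_ne (f j) 0 with h0 | h0
      · rw [h0, ENNReal.zero_rpow_of_pos (by linarith)]; simp
      · have hfS : f j ≤ S := ENNReal.le_tsum j
        have hfT : f j ≠ ⊤ := fun h => hST (top_le_iff.1 (h ▸ hfS))
        calc f j ^ r = f j ^ (r - 1) * f j := by
              rw [show r = (r-1) + 1 by ring, ENNReal.rpow_add _ _ h0 hfT, ENNReal.rpow_one]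
              ring_nf
          _ ≤ S ^ (r-1) * f j :=
              mul_le_mul_left (ENNReal.rpow_le_rpow hfS (by linarith)) _
    calc (∑' j, f j ^ r) ≤ ∑' j, S ^ (r-1) * f j := ENNReal.tsum_le_tsum hpt
      _ = S ^ (r-1) * S := by rw [ENNReal.tsum_mul_left]
      _ = S ^ r := by
          rw [show r = (r-1) + 1 by ring, ENNReal.rpow_add _ _ hS0 hST, ENNReal.rpow_one]
          ring_nf

lemma kernel_meas (n : ℕ) (δ p : ℝ) (w : Eucl n → ℝ) (hw : Measurable w) :
    Measurable fun z : Eucl n × Eucl n => fracKernel n δ p w z.1 z.2 := by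
  unfold fracKernel
  apply Measurable.ennreal_ofReal
  apply Measurable.div
  · exact (((hw.comp measurable_fst).sub (hw.comp measurable_snd)).abs).pow measurable_const
  · exact (measurable_dist).pow measurable_const

end S11
end

/-- For `0 < δ < 1`, `0 < p ≤ q < ∞` and a proper open set `G ⊆ ℝⁿ`,
the fractional `(δ,q,p)`-Hardy inequality holds in `G` (with some constant) if and only
if there is `C > 0` such that
`∫_K dist(x,∂G)^{-q(δ + n(1/q - 1/p))} dx ≤ C · cap_{δ,p}(K,G)^{q/p}`
for every compact `K ⊆ G`. -/
theorem statement11 (n : ℕ) (G : Set (Eucl n)) (hG : IsOpen G) (hGne : G.Nonempty)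
    (hGproper : G ≠ univ) (δ p q : ℝ) (hδ : δ ∈ Ioo (0:ℝ) 1) (hp : 0 < p) (hpq : p ≤ q) :
    (∃ C : ℝ, 0 < C ∧ HasFracHardy n δ p q C G) ↔
      (∃ C : ℝ, 0 < C ∧ ∀ K : Set (Eucl n), IsCompact K → K ⊆ G →
        (∫⁻ x in K, ENNReal.ofReal
            (infDist x (frontier G) ^ (-(q * (δ + n * (1/q - 1/p))))) ∂volume)
          ≤ ENNReal.ofReal C * fracCap n δ p K G ^ (q / p)) := by
  have hq : 0 < q := lt_of_lt_of_le hp hpq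
  haveI : PreconnectedSpace (Eucl n) :=
    ⟨(convex_univ : Convex ℝ (Set.univ : Set (Eucl n))).isPreconnected⟩
  have hfr : (frontier G).Nonempty := by
    rw [Set.nonempty_iff_ne_empty]
    intro hemp
    have hclosed : IsClosed G := by
      have h1 : closure G ⊆ G := by
        intro x hx
        by_contra hxG
        exact (Set.eq_empty_iff_forall_notMem.1 hemp x)
          (by rw [hG.frontier_eq]; exact ⟨hx, hxG⟩)
      exact isClosed_of_closure_subset h1
    rcases isClopen_iff.1 ⟨hclosed, hG⟩ with h | h
    · exact hGne.ne_empty h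
    · exact hGproper h
  have hdpos : ∀ x ∈ G, 0 < infDist x (frontier G) := by
    intro x hx
    rcases (infDist_nonneg : 0 ≤ infDist x (frontier G)).lt_or_eq with h | h
    · exact h
    · exfalso
      have hxfr : x ∈ frontier G := (isClosed_frontier.mem_iff_infDist_zero hfr).2 h.symm
      rw [hG.frontier_eq] at hxfr
      exact hxfr.2 hx
  constructor
  · rintro ⟨C, hC, hHardy⟩
    refine ⟨C, hC, fun K hK hKG => ?_⟩
    set c : ℝ≥0∞ := ENNReal.ofReal C with hc
    have hc0 : c ≠ 0 := (ENNReal.ofReal_pos.2 hC).ne'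
    have hcT : c ≠ ⊤ := ENNReal.ofReal_ne_top
    set r : ℝ := q / p with hr'
    have hr : 0 < r := div_pos hq hp
    set A := ∫⁻ x in K, ENNReal.ofReal
      (infDist x (frontier G) ^ (-(q * (δ + ↑n * (1/q - 1/p))))) ∂volume with hA
    have key : ∀ w : Eucl n → ℝ, Continuous w → HasCompactSupport w → tsupport w ⊆ G →
        (∀ x ∈ K, 1 ≤ w x) → A ≤ c * (fracEnergy n δ p G w) ^ r := by
      intro w hw1 hw2 hw3 hw4
      refine le_trans ?_ (hHardy w hw1 hw2 hw3)
      have hmeasW : Measurable fun x => ENNReal.ofReal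
          (|w x| ^ q / infDist x (frontier G) ^ (q * (δ + ↑n * (1/q - 1/p)))) :=
        (((hw1.abs.measurable).pow measurable_const).div
          (((continuous_infDist_pt (frontier G)).measurable).pow measurable_const)).ennreal_ofReal
      calc A ≤ ∫⁻ x in K, ENNReal.ofReal
            (|w x| ^ q / infDist x (frontier G) ^ (q * (δ + ↑n * (1/q - 1/p)))) ∂volume := by
            refine setLIntegral_mono hmeasW fun x hx => ?_
            have hdx := hdpos x (hKG hx)
            apply ENNReal.ofReal_le_ofReal
            have h1u : (1:ℝ) ≤ |w x| := le_trans (hw4 x hx) (le_abs_self _)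
            have h1 : (1:ℝ) ≤ |w x| ^ q := by
              calc (1:ℝ) = 1 ^ q := (Real.one_rpow q).symm
                _ ≤ |w x| ^ q := Real.rpow_le_rpow zero_le_one h1u hq.le
            rw [Real.rpow_neg hdx.le, div_eq_mul_inv]
            exact le_mul_of_one_le_left (inv_nonneg.2 (Real.rpow_nonneg infDist_nonneg _)) h1
        _ ≤ _ := lintegral_mono_set hKG
    by_cases hcap : fracCap n δ p K G = ⊤
    · rw [hcap, ENNReal.top_rpow_of_pos hr, ENNReal.mul_top hc0]
      exact le_top
    · have h1 : (A * c⁻¹) ^ (1/r) ≤ fracCap n δ p K G := by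
        unfold fracCap
        refine le_iInf fun w => le_iInf fun hw1 => le_iInf fun hw2 => le_iInf fun hw3 =>
          le_iInf fun hw4 => ?_
        have hkey := key w hw1 hw2 hw3 hw4
        have h5 : A * c⁻¹ ≤ fracEnergy n δ p G w ^ r := by
          calc A * c⁻¹ ≤ (c * fracEnergy n δ p G w ^ r) * c⁻¹ := mul_le_mul_left hkey _
            _ = fracEnergy n δ p G w ^ r := by
                rw [mul_comm c, mul_assoc, ENNReal.mul_inv_cancel hc0 hcT, mul_one]
        calc (A * c⁻¹) ^ (1/r) ≤ (fracEnergy n δ p G w ^ r) ^ (1/r) :=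
              ENNReal.rpow_le_rpow h5 (by positivity)
          _ = fracEnergy n δ p G w := by
              rw [← ENNReal.rpow_mul, mul_one_div, div_self hr.ne', ENNReal.rpow_one]
      have h2 : A * c⁻¹ ≤ fracCap n δ p K G ^ r := by
        have h3 := ENNReal.rpow_le_rpow h1 hr.le
        rwa [← ENNReal.rpow_mul, one_div, inv_mul_cancel₀ hr.ne', ENNReal.rpow_one] at h3
      calc A = c * (A * c⁻¹) := by
            rw [mul_comm c, mul_assoc, ENNReal.inv_mul_cancel hc0 hcT, mul_one]
        _ ≤ c * fracCap n δ p K G ^ r := mul_le_mul_right h2 _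
  · rintro ⟨C, hC, hcap⟩
    have hCp := S11.Cp_pos hp
    have hq2 : (0:ℝ) < (2:ℝ) ^ (2*q) := S11.two_rpow_pos _
    refine ⟨C * (2:ℝ) ^ (2*q) * S11.Cp p ^ (q/p), by positivity, ?_⟩
    intro u hu1 hu2 hu3
    set e : ℝ := q * (δ + ↑n * (1/q - 1/p)) with he
    set v : Eucl n → ℝ := fun x => |u x| with hv
    have hvcont : Continuous v := hu1.abs
    set g : ℤ → Eucl n → ℝ := fun j x => S11.tr j (v x) with hg
    have htrcont : ∀ j : ℤ, Continuous (S11.tr j) := fun j =>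
      (continuous_id.min continuous_const).sub (continuous_id.min continuous_const)
    have hgcont : ∀ j, Continuous (g j) := fun j => (htrcont j).comp hvcont
    set KS : ℤ → Set (Eucl n) := fun j => {x | (2:ℝ) ^ ((j:ℝ)) ≤ v x} with hKS
    set AS : ℤ → Set (Eucl n) :=
      fun j => {x | (2:ℝ) ^ ((j:ℝ)) ≤ v x ∧ v x < (2:ℝ) ^ ((j:ℝ)+1)} with hAS
    have hASm : ∀ j, MeasurableSet (AS j) := by
      intro j
      have h0 : AS j = v ⁻¹' (Set.Ico ((2:ℝ) ^ ((j:ℝ))) ((2:ℝ) ^ ((j:ℝ)+1))) := rfl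
      rw [h0]
      exact hvcont.measurable measurableSet_Ico
    have hKsupp : ∀ j : ℤ, KS j ⊆ tsupport u := by
      intro j x hx
      have hx' : (2:ℝ) ^ ((j:ℝ)) ≤ v x := hx
      apply subset_tsupport
      simp only [Function.mem_support]
      intro h0
      have h1 : v x = 0 := by simp [hv, h0]
      have h2 := S11.two_rpow_pos ((j:ℝ))
      linarith
    have hKsub : ∀ j, KS j ⊆ G := fun j => (hKsupp j).trans hu3
    have hKcomp : ∀ j, IsCompact (KS j) := fun j =>
      IsCompact.of_isClosed_subset hu2 (isClosed_le continuous_const hvcont) (hKsupp j)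
    have hcapKS : ∀ j : ℤ, fracCap n δ p (KS j) G ≤
        ENNReal.ofReal (((2:ℝ) ^ (1 - (j:ℝ))) ^ p) * fracEnergy n δ p G (g j) := by
      intro j
      set w : Eucl n → ℝ := fun x => (2:ℝ) ^ (1 - (j:ℝ)) * g j x with hw
      have hwcont : Continuous w := continuous_const.mul (hgcont j)
      have hwsupp : Function.support w ⊆ Function.support u := by
        intro x hx
        simp only [Function.mem_support] at hx ⊢
        intro h0
        apply hx
        simp [hw, hg, hv, h0, S11.tr_zero]
      have hwHCS : HasCompactSupport w := hu2.mono hwsupp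
      have hwts : tsupport w ⊆ G := (closure_mono hwsupp).trans hu3
      have hwone : ∀ x ∈ KS j, 1 ≤ w x := by
        intro x hx
        have hx' : (2:ℝ) ^ ((j:ℝ)) ≤ v x := hx
        have h0 : w x = (2:ℝ) ^ (1 - (j:ℝ)) * (2:ℝ) ^ ((j:ℝ) - 1) := by
          simp only [hw, hg]
          rw [S11.tr_eq_of_ge j hx']
        rw [h0, ← Real.rpow_add two_pos]
        norm_num
      have hchain : fracCap n δ p (KS j) G ≤ fracEnergy n δ p G w := by
        unfold fracCap
        exact iInf_le_of_le w (iInf_le_of_le hwcont (iInf_le_of_le hwHCS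
          (iInf_le_of_le hwts (iInf_le _ hwone))))
      refine hchain.trans (le_of_eq ?_)
      have hkeq : ∀ x y : Eucl n, fracKernel n δ p w x y =
          ENNReal.ofReal (((2:ℝ) ^ (1 - (j:ℝ))) ^ p) * fracKernel n δ p (g j) x y := by
        intro x y
        unfold fracKernel
        have habs : |w x - w y| = (2:ℝ) ^ (1 - (j:ℝ)) * |g j x - g j y| := by
          rw [show w x - w y = (2:ℝ) ^ (1 - (j:ℝ)) * (g j x - g j y) by simp only [hw]; ring,
            abs_mul, abs_of_pos (S11.two_rpow_pos _)]
        rw [habs, Real.mul_rpow (S11.two_rpow_pos _).le (abs_nonneg _), mul_div_assoc,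
          ENNReal.ofReal_mul (by positivity)]
      show fracEnergy n δ p G w = _
      unfold fracEnergy
      calc ∫⁻ x in G, ∫⁻ y in G, fracKernel n δ p w x y ∂volume ∂volume
          = ∫⁻ x in G, ∫⁻ y in G, ENNReal.ofReal (((2:ℝ) ^ (1 - (j:ℝ))) ^ p) *
              fracKernel n δ p (g j) x y ∂volume ∂volume :=
            lintegral_congr fun x => lintegral_congr fun y => hkeq x y
        _ = ENNReal.ofReal (((2:ℝ) ^ (1 - (j:ℝ))) ^ p) * ∫⁻ x in G, ∫⁻ y in G,
              fracKernel n δ p (g j) x y ∂volume ∂volume := by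
            rw [← lintegral_const_mul' _ _ ENNReal.ofReal_ne_top]
            exact lintegral_congr fun x => lintegral_const_mul' _ _ ENNReal.ofReal_ne_top
    set φ : ℤ → Eucl n → ℝ≥0∞ := fun j => (AS j).indicator
      (fun x => ENNReal.ofReal ((2:ℝ) ^ (((j:ℝ)+1)*q)) *
        ENNReal.ofReal (infDist x (frontier G) ^ (-e))) with hφ
    have hφmeas : ∀ j, Measurable (φ j) := fun j =>
      (measurable_const.mul
        (((continuous_infDist_pt (frontier G)).measurable.pow
          measurable_const).ennreal_ofReal)).indicator (hASm j)
    have hpt : ∀ x : Eucl n, ENNReal.ofReal (|u x| ^ q / infDist x (frontier G) ^ e)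
        ≤ ∑' j : ℤ, φ j x := by
      intro x
      by_cases hux : u x = 0
      · simp [hux, Real.zero_rpow hq.ne']
      · have hvx : 0 < v x := abs_pos.2 hux
        have hxG : x ∈ G := hu3 (subset_tsupport u (Function.mem_support.2 hux))
        set j : ℤ := ⌊Real.logb 2 (v x)⌋ with hj
        have hj1 : (2:ℝ) ^ ((j:ℝ)) ≤ v x := by
          calc (2:ℝ) ^ ((j:ℝ)) ≤ (2:ℝ) ^ (Real.logb 2 (v x)) :=
                S11.two_rpow_le (Int.floor_le _)
            _ = v x := Real.rpow_logb two_pos (by norm_num) hvx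
        have hj2 : v x < (2:ℝ) ^ ((j:ℝ)+1) := by
          calc v x = (2:ℝ) ^ (Real.logb 2 (v x)) :=
                (Real.rpow_logb two_pos (by norm_num) hvx).symm
            _ < _ := S11.two_rpow_lt (Int.lt_floor_add_one _)
        have hxA : x ∈ AS j := ⟨hj1, hj2⟩
        refine le_trans ?_ (ENNReal.le_tsum j)
        simp only [hφ]
        rw [Set.indicator_of_mem hxA, ← ENNReal.ofReal_mul (by positivity)]
        apply ENNReal.ofReal_le_ofReal
        have hdx := hdpos x hxG
        rw [Real.rpow_neg hdx.le, div_eq_mul_inv]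
        refine mul_le_mul_of_nonneg_right ?_
          (inv_nonneg.2 (Real.rpow_nonneg infDist_nonneg _))
        calc |u x| ^ q ≤ ((2:ℝ) ^ ((j:ℝ)+1)) ^ q :=
              Real.rpow_le_rpow (abs_nonneg _) hj2.le hq.le
          _ = (2:ℝ) ^ (((j:ℝ)+1)*q) := (Real.rpow_mul (by norm_num) _ _).symm
    have hAsubK : ∀ j, AS j ⊆ KS j := fun j x hx => hx.1
    have hpiece : ∀ j : ℤ, (∫⁻ x in G, φ j x ∂volume) ≤
        ENNReal.ofReal ((2:ℝ) ^ (((j:ℝ)+1)*q)) *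
          ∫⁻ x in KS j, ENNReal.ofReal (infDist x (frontier G) ^ (-e)) ∂volume := by
      intro j
      calc ∫⁻ x in G, φ j x ∂volume
          = ∫⁻ x in AS j, (fun x => ENNReal.ofReal ((2:ℝ) ^ (((j:ℝ)+1)*q)) *
              ENNReal.ofReal (infDist x (frontier G) ^ (-e))) x ∂(volume.restrict G) := by
            simp only [hφ]
            exact lintegral_indicator (hASm j) _
        _ ≤ ∫⁻ x in KS j, ENNReal.ofReal ((2:ℝ) ^ (((j:ℝ)+1)*q)) *
              ENNReal.ofReal (infDist x (frontier G) ^ (-e)) ∂volume := by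
            rw [Measure.restrict_restrict (hASm j)]
            exact lintegral_mono'
              (Measure.restrict_mono (fun x hx => hAsubK j hx.1) le_rfl) (le_refl _)
        _ = ENNReal.ofReal ((2:ℝ) ^ (((j:ℝ)+1)*q)) *
              ∫⁻ x in KS j, ENNReal.ofReal (infDist x (frontier G) ^ (-e)) ∂volume :=
            lintegral_const_mul' _ _ ENNReal.ofReal_ne_top
    have hLHS : (∫⁻ x in G, ENNReal.ofReal (|u x| ^ q / infDist x (frontier G) ^ e) ∂volume)
        ≤ ∑' j : ℤ, ENNReal.ofReal ((2:ℝ) ^ (((j:ℝ)+1)*q)) *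
            ∫⁻ x in KS j, ENNReal.ofReal (infDist x (frontier G) ^ (-e)) ∂volume := by
      calc (∫⁻ x in G, ENNReal.ofReal (|u x| ^ q / infDist x (frontier G) ^ e) ∂volume)
          ≤ ∫⁻ x in G, ∑' j : ℤ, φ j x ∂volume := lintegral_mono hpt
        _ = ∑' j : ℤ, ∫⁻ x in G, φ j x ∂volume :=
            lintegral_tsum fun j => (hφmeas j).aemeasurable
        _ ≤ _ := ENNReal.tsum_le_tsum hpiece
    set Eu := fracEnergy n δ p G u with hEu
    set Fj : ℤ → ℝ≥0∞ := fun j => fracEnergy n δ p G (g j) with hFj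
    have hterm : ∀ j : ℤ, ENNReal.ofReal ((2:ℝ) ^ (((j:ℝ)+1)*q)) *
        (∫⁻ x in KS j, ENNReal.ofReal (infDist x (frontier G) ^ (-e)) ∂volume)
        ≤ ENNReal.ofReal C * ENNReal.ofReal ((2:ℝ) ^ (2*q)) * Fj j ^ (q/p) := by
      intro j
      have h1 := hcap (KS j) (hKcomp j) (hKsub j)
      have h2 : (fracCap n δ p (KS j) G) ^ (q/p) ≤
          (ENNReal.ofReal (((2:ℝ) ^ (1 - (j:ℝ))) ^ p) * Fj j) ^ (q/p) :=
        ENNReal.rpow_le_rpow (hcapKS j) (by positivity)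
      have h3 : (ENNReal.ofReal (((2:ℝ) ^ (1 - (j:ℝ))) ^ p) * Fj j) ^ (q/p)
          = ENNReal.ofReal ((((2:ℝ) ^ (1 - (j:ℝ))) ^ p) ^ (q/p)) * Fj j ^ (q/p) := by
        rw [ENNReal.mul_rpow_of_nonneg _ _ (by positivity),
          ENNReal.ofReal_rpow_of_pos (by positivity)]
      have h4 : fracCap n δ p (KS j) G ^ (q/p) ≤
          ENNReal.ofReal ((((2:ℝ) ^ (1 - (j:ℝ))) ^ p) ^ (q/p)) * Fj j ^ (q/p) := h3 ▸ h2
      have hexp : (2:ℝ) ^ (((j:ℝ)+1)*q) * (((2:ℝ) ^ (1 - (j:ℝ))) ^ p) ^ (q/p)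
          = (2:ℝ) ^ (2*q) := by
        rw [← Real.rpow_mul (by norm_num : (0:ℝ) ≤ 2) (1 - (j:ℝ)) p,
          ← Real.rpow_mul (by norm_num : (0:ℝ) ≤ 2), ← Real.rpow_add two_pos]
        congr 1
        field_simp
        ring
      calc ENNReal.ofReal ((2:ℝ) ^ (((j:ℝ)+1)*q)) *
            (∫⁻ x in KS j, ENNReal.ofReal (infDist x (frontier G) ^ (-e)) ∂volume)
          ≤ ENNReal.ofReal ((2:ℝ) ^ (((j:ℝ)+1)*q)) *
              (ENNReal.ofReal C * fracCap n δ p (KS j) G ^ (q/p)) := mul_le_mul_right h1 _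
        _ ≤ ENNReal.ofReal ((2:ℝ) ^ (((j:ℝ)+1)*q)) * (ENNReal.ofReal C *
              (ENNReal.ofReal ((((2:ℝ) ^ (1 - (j:ℝ))) ^ p) ^ (q/p)) * Fj j ^ (q/p))) :=
            mul_le_mul_right (mul_le_mul_right h4 _) _
        _ = ENNReal.ofReal C * ENNReal.ofReal ((2:ℝ) ^ (2*q)) * Fj j ^ (q/p) := by
            rw [← hexp, ENNReal.ofReal_mul (by positivity)]
            ring
    have hr1 : (1:ℝ) ≤ q / p := (one_le_div hp).2 hpq
    have hFsum : (∑' j : ℤ, Fj j) ≤ ENNReal.ofReal (S11.Cp p) * Eu := by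
      have hgmeas : ∀ j : ℤ, Measurable (g j) := fun j => (hgcont j).measurable
      have hker : ∀ j : ℤ, Measurable fun z : Eucl n × Eucl n =>
          fracKernel n δ p (g j) z.1 z.2 :=
        fun j => S11.kernel_meas n δ p (g j) (hgmeas j)
      have houter : ∀ j : ℤ, Measurable fun x =>
          ∫⁻ y in G, fracKernel n δ p (g j) x y ∂volume :=
        fun j => Measurable.lintegral_prod_right' (hker j)
      have hptk : ∀ x y : Eucl n, (∑' j : ℤ, fracKernel n δ p (g j) x y)
          ≤ ENNReal.ofReal (S11.Cp p) * fracKernel n δ p u x y := by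
        intro x y
        have h1 : ∀ j : ℤ, fracKernel n δ p (g j) x y =
            ENNReal.ofReal (|S11.tr j (v x) - S11.tr j (v y)| ^ p) *
              ENNReal.ofReal ((dist x y ^ ((n:ℝ) + δ * p))⁻¹) := by
          intro j
          unfold fracKernel
          rw [div_eq_mul_inv, ENNReal.ofReal_mul (by positivity)]
        rw [tsum_congr h1, ENNReal.tsum_mul_right]
        have h2 : (∑' j : ℤ, ENNReal.ofReal (|S11.tr j (v x) - S11.tr j (v y)| ^ p))
            ≤ ENNReal.ofReal (S11.Cp p) * ENNReal.ofReal (|u x - u y| ^ p) := by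
          refine le_trans (S11.lemmaA' hp (abs_nonneg (u x)) (abs_nonneg (u y))) ?_
          have h3 := abs_abs_sub_abs_le_abs_sub (u x) (u y)
          exact mul_le_mul_right (ENNReal.ofReal_le_ofReal
            (Real.rpow_le_rpow (abs_nonneg _) h3 hp.le)) _
        calc (∑' j : ℤ, ENNReal.ofReal (|S11.tr j (v x) - S11.tr j (v y)| ^ p)) *
              ENNReal.ofReal ((dist x y ^ ((n:ℝ) + δ * p))⁻¹)
            ≤ (ENNReal.ofReal (S11.Cp p) * ENNReal.ofReal (|u x - u y| ^ p)) *
              ENNReal.ofReal ((dist x y ^ ((n:ℝ) + δ * p))⁻¹) := mul_le_mul_left h2 _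
          _ = ENNReal.ofReal (S11.Cp p) * fracKernel n δ p u x y := by
              unfold fracKernel
              rw [mul_assoc, ← ENNReal.ofReal_mul (by positivity), ← div_eq_mul_inv]
      calc (∑' j : ℤ, Fj j)
          = ∫⁻ x in G, ∑' j : ℤ, ∫⁻ y in G, fracKernel n δ p (g j) x y ∂volume ∂volume :=
            (lintegral_tsum fun j => (houter j).aemeasurable).symm
        _ = ∫⁻ x in G, ∫⁻ y in G, ∑' j : ℤ, fracKernel n δ p (g j) x y ∂volume ∂volume := by
            refine lintegral_congr fun x => ?_
            exact (lintegral_tsum fun j =>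
              ((hker j).comp measurable_prodMk_left).aemeasurable).symm
        _ ≤ ∫⁻ x in G, ∫⁻ y in G,
              ENNReal.ofReal (S11.Cp p) * fracKernel n δ p u x y ∂volume ∂volume :=
            lintegral_mono fun x => lintegral_mono fun y => hptk x y
        _ = ENNReal.ofReal (S11.Cp p) * Eu := by
            rw [hEu]
            unfold fracEnergy
            rw [← lintegral_const_mul' _ _ ENNReal.ofReal_ne_top]
            exact lintegral_congr fun x => lintegral_const_mul' _ _ ENNReal.ofReal_ne_top
    calc (∫⁻ x in G, ENNReal.ofReal (|u x| ^ q / infDist x (frontier G) ^ e) ∂volume)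
        ≤ ∑' j : ℤ, ENNReal.ofReal ((2:ℝ) ^ (((j:ℝ)+1)*q)) *
            ∫⁻ x in KS j, ENNReal.ofReal (infDist x (frontier G) ^ (-e)) ∂volume := hLHS
      _ ≤ ∑' j : ℤ, ENNReal.ofReal C * ENNReal.ofReal ((2:ℝ)^(2*q)) * Fj j ^ (q/p) :=
          ENNReal.tsum_le_tsum hterm
      _ = ENNReal.ofReal C * ENNReal.ofReal ((2:ℝ)^(2*q)) * ∑' j : ℤ, Fj j ^ (q/p) :=
          ENNReal.tsum_mul_left
      _ ≤ ENNReal.ofReal C * ENNReal.ofReal ((2:ℝ)^(2*q)) * (∑' j : ℤ, Fj j) ^ (q/p) :=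
          mul_le_mul_right (S11.tsum_rpow_le hr1 Fj) _
      _ ≤ ENNReal.ofReal C * ENNReal.ofReal ((2:ℝ)^(2*q)) *
            (ENNReal.ofReal (S11.Cp p) * Eu) ^ (q/p) :=
          mul_le_mul_right (ENNReal.rpow_le_rpow hFsum (by positivity)) _
      _ = ENNReal.ofReal (C * (2:ℝ)^(2*q) * S11.Cp p ^ (q/p)) * Eu ^ (q/p) := by
          rw [ENNReal.mul_rpow_of_nonneg _ _ (by positivity),
            ENNReal.ofReal_rpow_of_pos hCp,
            ENNReal.ofReal_mul (by positivity), ENNReal.ofReal_mul hC.le]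
          ring
end
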